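/- arXiv:1606.09107 — 6 statements merged into one kernel-verified Lean document; each statement's English description precedes it below -/
import Mathlib

section
/- There exists a constant C > 0 such that for every finite directed multigraph G = (V, E) with m = |E| ≥ 2 edges, the number d(G) of trail-representable subsets of E satisfies d(G) ≤ C · (√(log m) / √m) · 2^m; equivalently, the trail-fraction f(G) = d(G)/2^m is at most C·√(log m)/√m. -/
open Finset

set_option linter.unusedSectionVars false
set_option maxHeartbeats 1000000

/-- A subset `T` of the edges of a directed multigraph (given by source and target
maps `s t : E → V`) is trail-representable if its edges can be ordered into a list
(each edge used exactly once) in which consecutive edges match head-to-tail. -/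
def IsTrail {V E : Type*} [DecidableEq E] (s t : E → V) (T : Finset E) : Prop :=
  ∃ l : List E, l.Nodup ∧ l.toFinset = T ∧ l.Chain' (fun e f => t e = s f)

section Aux
variable {V E : Type*} [DecidableEq V] [DecidableEq E]

def dIn (t : E → V) (T : Finset E) (v : V) : ℕ := (T.filter fun e => t e = v).card
def dOut (s : E → V) (T : Finset E) (v : V) : ℕ := (T.filter fun e => s e = v).card
def deg [Fintype E] (s t : E → V) (v : V) : ℕ := dOut s univ v + dIn t univ v

theorem dIn_toFinset (t : E → V) (v : V) (l : List E) (hl : l.Nodup) :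
    dIn t l.toFinset v = l.countP (fun e => decide (t e = v)) := by
  rw [dIn, List.countP_eq_length_filter]
  have h : (l.toFinset.filter fun e => t e = v)
      = (l.filter (fun e => decide (t e = v))).toFinset := by
    ext e; simp
  rw [h, List.toFinset_card_of_nodup (hl.filter _)]

theorem dOut_toFinset (s : E → V) (v : V) (l : List E) (hl : l.Nodup) :
    dOut s l.toFinset v = l.countP (fun e => decide (s e = v)) := by
  rw [dOut, List.countP_eq_length_filter]
  have h : (l.toFinset.filter fun e => s e = v)
      = (l.filter (fun e => decide (s e = v))).toFinset := by
    ext e; simp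
  rw [h, List.toFinset_card_of_nodup (hl.filter _)]

theorem list_excess (s t : E → V) (v : V) :
    ∀ (r : List E) (e : E), List.Chain' (fun a b => t a = s b) (e :: r) →
      ((e :: r).countP (fun f => decide (t f = v)) : ℤ) -
        (e :: r).countP (fun f => decide (s f = v)) =
      (if t ((e :: r).getLast (List.cons_ne_nil e r)) = v then 1 else 0) -
        (if s e = v then 1 else 0) := by
  intro r
  induction r with
  | nil =>
      intro e _
      simp only [List.countP_cons, List.countP_nil, List.getLast_singleton]
      simp only [decide_eq_true_eq]
      split_ifs <;> simp_all
  | cons f r' ih =>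
      intro e hch
      simp only [List.Chain', List.isChain_cons_cons] at hch
      obtain ⟨hef, hch'⟩ := hch
      have hIH := ih f hch'
      have hlast : (e :: f :: r').getLast (List.cons_ne_nil _ _) =
          (f :: r').getLast (List.cons_ne_nil _ _) := List.getLast_cons (List.cons_ne_nil _ _)
      rw [hlast]
      simp only [List.countP_cons, decide_eq_true_eq] at hIH ⊢
      rw [hef]
      push_cast at hIH ⊢
      split_ifs at hIH ⊢ <;> omega

theorem trail_diff (s t : E → V) {T : Finset E} (h : IsTrail s t T) (v : V) :
    -1 ≤ (dIn t T v : ℤ) - dOut s T v ∧ (dIn t T v : ℤ) - dOut s T v ≤ 1 := by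
  obtain ⟨l, hnd, hTf, hch⟩ := h
  subst hTf
  cases l with
  | nil => simp [dIn, dOut]
  | cons e r =>
      rw [dIn_toFinset t v _ hnd, dOut_toFinset s v _ hnd]
      have := list_excess s t v r e hch
      constructor <;> rw [this] <;> split_ifs <;> omega

theorem trail_balanced (s t : E → V) {T : Finset E} (h : IsTrail s t T) (hne : T.Nonempty) :
    ∃ a b, (∃ e : E, s e = a) ∧ (∃ e : E, t e = b) ∧
      ∀ v, v ≠ a → v ≠ b → dIn t T v = dOut s T v := by
  obtain ⟨l, hnd, hTf, hch⟩ := h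
  subst hTf
  cases l with
  | nil => simp at hne
  | cons e r =>
      refine ⟨s e, t ((e :: r).getLast (List.cons_ne_nil e r)), ⟨e, rfl⟩, ⟨_, rfl⟩, ?_⟩
      intro v hva hvb
      have hx := list_excess s t v r e hch
      rw [if_neg (fun hh => hvb hh.symm), if_neg (fun hh => hva hh.symm)] at hx
      rw [dIn_toFinset t v _ hnd, dOut_toFinset s v _ hnd]
      omega

theorem card_filter_inter_card_le {E : Type*} [DecidableEq E] [Fintype E]
    (I : Finset E) (j : ℕ) :
    ((univ : Finset (Finset E)).filter fun T => (T ∩ I).card = j).card ≤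
      I.card.choose j * 2 ^ (Fintype.card E - I.card) := by
  have hle := Finset.card_le_card_of_injOn
    (f := fun T : Finset E => (T ∩ I, T \ I))
    (s := (univ : Finset (Finset E)).filter fun T => (T ∩ I).card = j)
    (t := (I.powersetCard j) ×ˢ (univ \ I).powerset)
    ?_ ?_
  · calc _ ≤ _ := hle
      _ = I.card.choose j * 2 ^ (Fintype.card E - I.card) := by
        rw [Finset.card_product, Finset.card_powersetCard, Finset.card_powerset,
          Finset.card_sdiff_of_subset (Finset.subset_univ I), Finset.card_univ]
  · intro T hT
    rw [Finset.mem_coe, Finset.mem_filter] at hT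
    rw [Finset.mem_coe, Finset.mem_product, Finset.mem_powersetCard, Finset.mem_powerset]
    refine ⟨⟨Finset.inter_subset_right, hT.2⟩, ?_⟩
    intro e he
    rw [Finset.mem_sdiff] at he ⊢
    exact ⟨Finset.mem_univ e, he.2⟩
  · intro T1 _ T2 _ hpair
    simp only [Prod.mk.injEq] at hpair
    ext e
    by_cases heI : e ∈ I
    · have := hpair.1
      constructor <;> intro heT
      · have : e ∈ T2 ∩ I := hpair.1 ▸ Finset.mem_inter.mpr ⟨heT, heI⟩
        exact (Finset.mem_inter.mp this).1
      · have : e ∈ T1 ∩ I := hpair.1.symm ▸ Finset.mem_inter.mpr ⟨heT, heI⟩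
        exact (Finset.mem_inter.mp this).1
    · constructor <;> intro heT
      · have : e ∈ T2 \ I := hpair.2 ▸ Finset.mem_sdiff.mpr ⟨heT, heI⟩
        exact (Finset.mem_sdiff.mp this).1
      · have : e ∈ T1 \ I := hpair.2.symm ▸ Finset.mem_sdiff.mpr ⟨heT, heI⟩
        exact (Finset.mem_sdiff.mp this).1

theorem centralBinom_sq_bound : ∀ n : ℕ, n.centralBinom ^ 2 * (3 * n + 1) ≤ 16 ^ n := by
  intro n
  induction n with
  | zero => simp [Nat.centralBinom]
  | succ n ih =>
      have key := Nat.succ_mul_centralBinom_succ n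
      have hsq : (n + 1) ^ 2 * (n + 1).centralBinom ^ 2
          = 4 * (2 * n + 1) ^ 2 * n.centralBinom ^ 2 := by
        have : ((n + 1) * (n + 1).centralBinom) ^ 2
            = (2 * (2 * n + 1) * n.centralBinom) ^ 2 := by rw [key]
        ring_nf at this ⊢
        linarith [this]
      have hpoly : 4 * (2 * n + 1) ^ 2 * (3 * n + 4) ≤ 16 * (n + 1) ^ 2 * (3 * n + 1) := by
        nlinarith [n.zero_le]
      have hmain : (n + 1).centralBinom ^ 2 * (3 * (n + 1) + 1) * ((n + 1) ^ 2 * (3 * n + 1))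
          ≤ 16 ^ (n + 1) * ((n + 1) ^ 2 * (3 * n + 1)) := by
        calc (n + 1).centralBinom ^ 2 * (3 * (n + 1) + 1) * ((n + 1) ^ 2 * (3 * n + 1))
            = (4 * (2 * n + 1) ^ 2 * (3 * n + 4)) * (n.centralBinom ^ 2 * (3 * n + 1)) := by
              have h : 3 * (n + 1) + 1 = 3 * n + 4 := by ring
              rw [h]
              calc (n + 1).centralBinom ^ 2 * (3 * n + 4) * ((n + 1) ^ 2 * (3 * n + 1))
                  = ((n + 1) ^ 2 * (n + 1).centralBinom ^ 2) * ((3 * n + 4) * (3 * n + 1)) := by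
                    ring
                _ = (4 * (2 * n + 1) ^ 2 * n.centralBinom ^ 2) * ((3 * n + 4) * (3 * n + 1)) := by
                    rw [hsq]
                _ = (4 * (2 * n + 1) ^ 2 * (3 * n + 4)) * (n.centralBinom ^ 2 * (3 * n + 1)) := by
                    ring
          _ ≤ (4 * (2 * n + 1) ^ 2 * (3 * n + 4)) * 16 ^ n := Nat.mul_le_mul_left _ ih
          _ ≤ (16 * (n + 1) ^ 2 * (3 * n + 1)) * 16 ^ n := Nat.mul_le_mul_right _ hpoly
          _ = 16 ^ (n + 1) * ((n + 1) ^ 2 * (3 * n + 1)) := by ring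
      have hpos : 0 < (n + 1) ^ 2 * (3 * n + 1) := by positivity
      exact Nat.le_of_mul_le_mul_right hmain hpos

theorem choose_sq_bound (d j : ℕ) (hd : 1 ≤ d) : d.choose j ^ 2 * d ≤ 4 ^ d := by
  have h1 : d.choose j ≤ d.choose (d / 2) := Nat.choose_le_middle j d
  have h2 : d.choose j ^ 2 ≤ d.choose (d / 2) ^ 2 := Nat.pow_le_pow_left h1 2
  rcases Nat.even_or_odd d with ⟨k, hk⟩ | ⟨k, hk⟩
  · subst hk
    have hmid : (k + k) / 2 = k := by omega
    have hcb : (k + k).choose k = k.centralBinom := by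
      rw [Nat.centralBinom]; congr 1; omega
    rw [hmid, hcb] at h2
    calc (k + k).choose j ^ 2 * (k + k) ≤ k.centralBinom ^ 2 * (k + k) :=
          Nat.mul_le_mul_right _ h2
      _ ≤ k.centralBinom ^ 2 * (3 * k + 1) := by
          apply Nat.mul_le_mul_left; omega
      _ ≤ 16 ^ k := centralBinom_sq_bound k
      _ = 4 ^ (k + k) := by
          rw [show k + k = 2 * k by ring, Nat.pow_mul]
  · subst hk
    have hmid : (2 * k + 1) / 2 = k := by omega
    rw [hmid] at h2
    -- 2 * choose (2k+1) k = centralBinom (k+1)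
    have hdouble : 2 * (2 * k + 1).choose k = (k + 1).centralBinom := by
      have hs : (2 * k + 1).choose (k + 1) = (2 * k + 1).choose k := by
        rw [← Nat.choose_symm (by omega : k + 1 ≤ 2 * k + 1)]
        congr 1
        omega
      have hp : (2 * k + 2).choose (k + 1) = (2 * k + 1).choose k + (2 * k + 1).choose (k + 1) :=
        Nat.choose_succ_succ' (2 * k + 1) k ▸ rfl
      rw [Nat.centralBinom]
      have h2k : 2 * (k + 1) = 2 * k + 2 := by ring
      rw [h2k, hp, hs]
      omega
    have hcb := centralBinom_sq_bound (k + 1)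
    have h4 : 4 * ((2 * k + 1).choose k) ^ 2 * (3 * k + 4) ≤ 16 ^ (k + 1) := by
      calc 4 * ((2 * k + 1).choose k) ^ 2 * (3 * k + 4)
          = (2 * (2 * k + 1).choose k) ^ 2 * (3 * (k + 1) + 1) := by ring
        _ = (k + 1).centralBinom ^ 2 * (3 * (k + 1) + 1) := by rw [hdouble]
        _ ≤ 16 ^ (k + 1) := hcb
    have h16 : 16 ^ (k + 1) = 4 * 4 ^ (2 * k + 1) := by
      have : (16 : ℕ) ^ (k + 1) = 4 ^ (2 * (k + 1)) := by
        rw [Nat.pow_mul]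
      rw [this]
      have : 2 * (k + 1) = (2 * k + 1) + 1 := by ring
      rw [this, Nat.pow_succ]
      ring
    rw [h16] at h4
    have h5 : ((2 * k + 1).choose k) ^ 2 * (3 * k + 4) ≤ 4 ^ (2 * k + 1) := by
      have h4' : 4 * (((2 * k + 1).choose k) ^ 2 * (3 * k + 4)) ≤ 4 * 4 ^ (2 * k + 1) := by
        calc 4 * (((2 * k + 1).choose k) ^ 2 * (3 * k + 4))
            = 4 * ((2 * k + 1).choose k) ^ 2 * (3 * k + 4) := by ring
          _ ≤ 4 * 4 ^ (2 * k + 1) := h4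
      exact Nat.le_of_mul_le_mul_left h4' (by norm_num)
    calc (2 * k + 1).choose j ^ 2 * (2 * k + 1) ≤ ((2 * k + 1).choose k) ^ 2 * (2 * k + 1) :=
          Nat.mul_le_mul_right _ h2
      _ ≤ ((2 * k + 1).choose k) ^ 2 * (3 * k + 4) := by
          apply Nat.mul_le_mul_left; omega
      _ ≤ 4 ^ (2 * k + 1) := h5

theorem choose_real_bound (d j : ℕ) (hd : 1 ≤ d) :
    (d.choose j : ℝ) ≤ 2 ^ d / Real.sqrt d := by
  have hnat := choose_sq_bound d j hd
  have hreal : ((d.choose j : ℝ)) ^ 2 * d ≤ 4 ^ d := by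
    have := (Nat.cast_le (α := ℝ)).mpr hnat
    push_cast at this
    linarith
  have hdpos : (0 : ℝ) < d := by exact_mod_cast hd
  have hsqrtpos : 0 < Real.sqrt d := Real.sqrt_pos.mpr hdpos
  rw [le_div_iff₀ hsqrtpos]
  have hsq : ((d.choose j : ℝ) * Real.sqrt d) ^ 2 ≤ ((2 : ℝ) ^ d) ^ 2 := by
    have h1 : ((d.choose j : ℝ) * Real.sqrt d) ^ 2 = (d.choose j : ℝ) ^ 2 * d := by
      rw [mul_pow, Real.sq_sqrt hdpos.le]
    have h2 : ((2 : ℝ) ^ d) ^ 2 = 4 ^ d := by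
      rw [← pow_mul, mul_comm, pow_mul]
      norm_num
    rw [h1, h2]
    exact hreal
  have h3 : (0 : ℝ) ≤ (d.choose j : ℝ) * Real.sqrt d := by positivity
  have h4 : (0 : ℝ) ≤ (2 : ℝ) ^ d := by positivity
  nlinarith [hsq, h3, h4]

theorem card_balanced_le [Fintype E] (s t : E → V) (hst : ∀ e, s e ≠ t e) (M : Finset E)
    (hM : ∀ f ∈ M, ∀ g ∈ M, f ≠ g → s f ≠ s g ∧ s f ≠ t g ∧ t f ≠ s g ∧ t f ≠ t g)
    (a b : V)
    [DecidablePred fun T : Finset E => ∀ v, v ≠ a → v ≠ b → dIn t T v = dOut s T v] :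
    ((univ : Finset (Finset E)).filter fun T =>
        ∀ v, v ≠ a → v ≠ b → dIn t T v = dOut s T v).card
      ≤ 2 ^ (Fintype.card E - (M.card - 1)) := by
  classical
  set good : E → Prop := fun f => ¬((s f = a ∨ s f = b) ∧ (t f = a ∨ t f = b)) with hgood
  set I : Finset E := M.filter good with hIdef
  -- at most one bad edge
  have hbad : (M.filter fun f => ¬ good f).card ≤ 1 := by
    rw [Finset.card_le_one]
    intro f hf g hg
    rw [Finset.mem_filter] at hf hg
    by_contra hne
    obtain ⟨hfM, hf'⟩ := hf
    obtain ⟨hgM, hg'⟩ := hg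
    simp only [hgood, not_not] at hf' hg'
    obtain ⟨hf1 | hf1, hf2 | hf2⟩ := hf' <;> obtain ⟨hg1 | hg1, hg2 | hg2⟩ := hg' <;>
      first
        | (exact hst f (hf1.trans hf2.symm))
        | (exact hst g (hg1.trans hg2.symm))
        | (obtain ⟨h1, h2, h3, h4⟩ := hM f hfM g hgM hne; simp_all)
  have hIcard : M.card ≤ I.card + 1 := by
    have h := Finset.card_filter_add_card_filter_not (s := M) (p := good)
    rw [hIdef]
    omega
  -- the chosen endpoint
  set u : E → V := fun f => if s f = a ∨ s f = b then t f else s f with hu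
  have hu1 : ∀ f ∈ I, u f ≠ a ∧ u f ≠ b := by
    intro f hf
    rw [hIdef, Finset.mem_filter] at hf
    obtain ⟨hfM, hfg⟩ := hf
    rw [hgood] at hfg
    rw [hu]
    simp only
    split_ifs with hc
    · push_neg at hfg
      have := hfg hc
      tauto
    · push_neg at hc
      exact hc
  have hu2 : ∀ f, u f = s f ∨ u f = t f := by
    intro f
    rw [hu]
    simp only
    split_ifs <;> tauto
  -- recovery
  have hrec : ∀ T ∈ ((univ : Finset (Finset E)).filter fun T =>
      ∀ v, v ≠ a → v ≠ b → dIn t T v = dOut s T v), ∀ f ∈ I,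
      (f ∈ T ↔ dIn t (T \ I) (u f) ≠ dOut s (T \ I) (u f)) := by
    intro T hT f hfI
    rw [Finset.mem_filter] at hT
    have hfM : f ∈ M := (Finset.mem_filter.mp hfI).1
    set v := u f with hv
    obtain ⟨hva, hvb⟩ := hu1 f hfI
    have hbal : dIn t T v = dOut s T v := hT.2 v hva hvb
    -- no other edge of I is incident to v
    have hother : ∀ g ∈ I, g ≠ f → s g ≠ v ∧ t g ≠ v := by
      intro g hgI hgf
      have hgM : g ∈ M := (Finset.mem_filter.mp hgI).1
      obtain ⟨h1, h2, h3, h4⟩ := hM g hgM f hfM hgf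
      rcases hu2 f with hvf | hvf <;> rw [hv, hvf] <;> exact ⟨by assumption, by assumption⟩
    have hsplitIn : dIn t T v = dIn t (T \ I) v + (if f ∈ T ∧ t f = v then 1 else 0) := by
      rw [dIn, dIn]
      have hunion : T.filter (fun e => t e = v)
          = ((T \ I).filter fun e => t e = v) ∪ ((T ∩ I).filter fun e => t e = v) := by
        rw [← Finset.filter_union, Finset.sdiff_union_inter]
      rw [hunion, Finset.card_union_of_disjoint
        (Finset.disjoint_filter_filter (Finset.disjoint_sdiff_inter T I))]
      congr 1
      by_cases hc : f ∈ T ∧ t f = v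
      · rw [if_pos hc]
        have : (T ∩ I).filter (fun e => t e = v) = {f} := by
          ext g
          simp only [Finset.mem_filter, Finset.mem_inter, Finset.mem_singleton]
          constructor
          · rintro ⟨⟨hgT, hgI⟩, hgv⟩
            by_contra hgf
            exact (hother g hgI hgf).2 hgv
          · rintro rfl
            exact ⟨⟨hc.1, hfI⟩, hc.2⟩
        rw [this, Finset.card_singleton]
      · rw [if_neg hc]
        have : (T ∩ I).filter (fun e => t e = v) = ∅ := by
          ext g
          simp only [Finset.mem_filter, Finset.mem_inter, Finset.notMem_empty, iff_false]
          rintro ⟨⟨hgT, hgI⟩, hgv⟩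
          by_cases hgf : g = f
          · subst hgf; exact hc ⟨hgT, hgv⟩
          · exact (hother g hgI hgf).2 hgv
        rw [this, Finset.card_empty]
    have hsplitOut : dOut s T v = dOut s (T \ I) v + (if f ∈ T ∧ s f = v then 1 else 0) := by
      rw [dOut, dOut]
      have hunion : T.filter (fun e => s e = v)
          = ((T \ I).filter fun e => s e = v) ∪ ((T ∩ I).filter fun e => s e = v) := by
        rw [← Finset.filter_union, Finset.sdiff_union_inter]
      rw [hunion, Finset.card_union_of_disjoint
        (Finset.disjoint_filter_filter (Finset.disjoint_sdiff_inter T I))]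
      congr 1
      by_cases hc : f ∈ T ∧ s f = v
      · rw [if_pos hc]
        have : (T ∩ I).filter (fun e => s e = v) = {f} := by
          ext g
          simp only [Finset.mem_filter, Finset.mem_inter, Finset.mem_singleton]
          constructor
          · rintro ⟨⟨hgT, hgI⟩, hgv⟩
            by_contra hgf
            exact (hother g hgI hgf).1 hgv
          · rintro rfl
            exact ⟨⟨hc.1, hfI⟩, hc.2⟩
        rw [this, Finset.card_singleton]
      · rw [if_neg hc]
        have : (T ∩ I).filter (fun e => s e = v) = ∅ := by
          ext g
          simp only [Finset.mem_filter, Finset.mem_inter, Finset.notMem_empty, iff_false]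
          rintro ⟨⟨hgT, hgI⟩, hgv⟩
          by_cases hgf : g = f
          · subst hgf; exact hc ⟨hgT, hgv⟩
          · exact (hother g hgI hgf).1 hgv
        rw [this, Finset.card_empty]
    rcases hu2 f with hvf | hvf
    · -- v = s f, so t f ≠ v
      have hsf : s f = v := by rw [hv, hvf]
      have htf : ¬ (t f = v) := by
        intro hh
        exact hst f (hsf.trans hh.symm)
      have h1 : dIn t T v = dIn t (T \ I) v := by
        rw [hsplitIn, if_neg (fun hc => htf hc.2), Nat.add_zero]
      have h2 : dOut s T v = dOut s (T \ I) v + (if f ∈ T then 1 else 0) := by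
        rw [hsplitOut]
        congr 1
        exact if_congr (by simp [hsf]) rfl rfl
      by_cases hfT : f ∈ T
      · simp only [hfT, if_true] at h2
        simp only [hfT, true_iff, ne_eq]
        omega
      · simp only [hfT, if_false] at h2
        simp only [hfT, false_iff, ne_eq, not_not]
        omega
    · have htf : t f = v := by rw [hv, hvf]
      have hsf : ¬ (s f = v) := by
        intro hh
        exact hst f (hh.trans htf.symm)
      have h1 : dOut s T v = dOut s (T \ I) v := by
        rw [hsplitOut, if_neg (fun hc => hsf hc.2), Nat.add_zero]
      have h2 : dIn t T v = dIn t (T \ I) v + (if f ∈ T then 1 else 0) := by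
        rw [hsplitIn]
        congr 1
        exact if_congr (by simp [htf]) rfl rfl
      by_cases hfT : f ∈ T
      · simp only [hfT, if_true] at h2
        simp only [hfT, true_iff, ne_eq]
        omega
      · simp only [hfT, if_false] at h2
        simp only [hfT, false_iff, ne_eq, not_not]
        omega
  -- injection into powerset of the complement of I
  have hinj := Finset.card_le_card_of_injOn (f := fun T : Finset E => T \ I)
    (s := (univ : Finset (Finset E)).filter fun T =>
        ∀ v, v ≠ a → v ≠ b → dIn t T v = dOut s T v)
    (t := ((univ : Finset E) \ I).powerset) ?_ ?_
  · calc _ ≤ _ := hinj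
      _ ≤ 2 ^ (Fintype.card E - (M.card - 1)) := by
        rw [Finset.card_powerset, Finset.card_sdiff_of_subset (Finset.subset_univ I), Finset.card_univ]
        apply Nat.pow_le_pow_right (by norm_num)
        omega
  · intro T hT
    rw [Finset.mem_coe, Finset.mem_powerset]
    intro e he
    rw [Finset.mem_sdiff] at he ⊢
    exact ⟨Finset.mem_univ e, he.2⟩
  · intro T1 hT1 T2 hT2 heq
    simp only at heq
    ext e
    by_cases heI : e ∈ I
    · rw [hrec T1 (by simpa using hT1) e heI, hrec T2 (by simpa using hT2) e heI, heq]
    · constructor <;> intro heT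
      · have : e ∈ T2 \ I := heq ▸ Finset.mem_sdiff.mpr ⟨heT, heI⟩
        exact (Finset.mem_sdiff.mp this).1
      · have : e ∈ T1 \ I := heq.symm ▸ Finset.mem_sdiff.mpr ⟨heT, heI⟩
        exact (Finset.mem_sdiff.mp this).1

theorem exists_max_matching [Fintype E] (s t : E → V) :
    ∃ M : Finset E,
      (∀ f ∈ M, ∀ g ∈ M, f ≠ g → s f ≠ s g ∧ s f ≠ t g ∧ t f ≠ s g ∧ t f ≠ t g) ∧
      (∀ e : E, ∃ f ∈ M, s e = s f ∨ s e = t f ∨ t e = s f ∨ t e = t f) := by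
  classical
  set P : Finset E → Prop := fun M =>
    ∀ f ∈ M, ∀ g ∈ M, f ≠ g → s f ≠ s g ∧ s f ≠ t g ∧ t f ≠ s g ∧ t f ≠ t g with hP
  have hne : ((univ : Finset (Finset E)).filter P).Nonempty := by
    refine ⟨∅, ?_⟩
    rw [Finset.mem_filter]
    exact ⟨Finset.mem_univ _, by intro f hf; simp at hf⟩
  obtain ⟨M, hMmem, hMmax⟩ := Finset.exists_max_image _ (fun M : Finset E => M.card) hne
  rw [Finset.mem_filter] at hMmem
  refine ⟨M, hMmem.2, ?_⟩
  intro e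
  by_cases heM : e ∈ M
  · exact ⟨e, heM, Or.inl rfl⟩
  · have hnotP : ¬ P (insert e M) := by
      intro hP'
      have hcard := hMmax (insert e M) (Finset.mem_filter.mpr ⟨Finset.mem_univ _, hP'⟩)
      rw [Finset.card_insert_of_notMem heM] at hcard
      omega
    simp only [hP] at hnotP
    push_neg at hnotP
    obtain ⟨f, hf, g, hg, hfg, hviol⟩ := hnotP
    rw [Finset.mem_insert] at hf hg
    -- turn the violated conjunction into a disjunction of equalities
    have hdisj : s f = s g ∨ s f = t g ∨ t f = s g ∨ t f = t g := by tauto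
    rcases hf with rfl | hfM
    · rcases hg with rfl | hgM
      · exact absurd rfl hfg
      · exact ⟨g, hgM, hdisj⟩
    · rcases hg with rfl | hgM
      · refine ⟨f, hfM, ?_⟩
        tauto
      · exact absurd (hMmem.2 f hfM g hgM hfg) (by tauto)

theorem card_le_sum_deg [Fintype E] (s t : E → V) (M : Finset E)
    (hcover : ∀ e : E, ∃ f ∈ M, s e = s f ∨ s e = t f ∨ t e = s f ∨ t e = t f) :
    Fintype.card E ≤ ∑ f ∈ M, (deg s t (s f) + deg s t (t f)) := by
  classical
  have hsub : (univ : Finset E) ⊆ M.biUnion (fun f =>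
      univ.filter fun e => s e = s f ∨ s e = t f ∨ t e = s f ∨ t e = t f) := by
    intro e _
    rw [Finset.mem_biUnion]
    obtain ⟨f, hfM, hf⟩ := hcover e
    exact ⟨f, hfM, Finset.mem_filter.mpr ⟨Finset.mem_univ _, hf⟩⟩
  calc Fintype.card E = (univ : Finset E).card := (Finset.card_univ).symm
    _ ≤ (M.biUnion fun f =>
        univ.filter fun e => s e = s f ∨ s e = t f ∨ t e = s f ∨ t e = t f).card :=
      Finset.card_le_card hsub
    _ ≤ ∑ f ∈ M,
        (univ.filter fun e => s e = s f ∨ s e = t f ∨ t e = s f ∨ t e = t f).card :=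
      Finset.card_biUnion_le
    _ ≤ ∑ f ∈ M, (deg s t (s f) + deg s t (t f)) := by
      apply Finset.sum_le_sum
      intro f _
      have hsplit : (univ.filter fun e => s e = s f ∨ s e = t f ∨ t e = s f ∨ t e = t f)
          ⊆ ((univ.filter fun e : E => s e = s f) ∪ (univ.filter fun e : E => s e = t f)) ∪
            ((univ.filter fun e : E => t e = s f) ∪ (univ.filter fun e : E => t e = t f)) := by
        intro e he
        simp only [Finset.mem_filter, Finset.mem_union, Finset.mem_univ, true_and] at he ⊢
        tauto
      have h1 := Finset.card_le_card hsplit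
      have h2 := Finset.card_union_le
        ((univ.filter fun e : E => s e = s f) ∪ (univ.filter fun e : E => s e = t f))
        ((univ.filter fun e : E => t e = s f) ∪ (univ.filter fun e : E => t e = t f))
      have h3 := Finset.card_union_le (univ.filter fun e : E => s e = s f)
        (univ.filter fun e : E => s e = t f)
      have h4 := Finset.card_union_le (univ.filter fun e : E => t e = s f)
        (univ.filter fun e : E => t e = t f)
      simp only [deg, dIn, dOut]
      omega

theorem case_one_bound [Fintype E] (s t : E → V) (hst : ∀ e, s e ≠ t e) (v : V)
    (hd : 1 ≤ deg s t v) (F : Finset (Finset E))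
    (hF : ∀ T ∈ F, -1 ≤ (dIn t T v : ℤ) - dOut s T v ∧ (dIn t T v : ℤ) - dOut s T v ≤ 1) :
    (F.card : ℝ) ≤ 3 * 2 ^ (Fintype.card E) / Real.sqrt (deg s t v) := by
  classical
  set In : Finset E := univ.filter fun e => t e = v with hIn
  set O : Finset E := univ.filter fun e => s e = v with hO
  set Iv : Finset E := In ∪ O with hIv
  set bb : ℕ := O.card with hbb
  have hdisj : Disjoint In O := by
    rw [Finset.disjoint_left]
    intro e h1 h2
    rw [hIn, Finset.mem_filter] at h1
    rw [hO, Finset.mem_filter] at h2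
    exact hst e (h2.2.trans h1.2.symm)
  have hd_eq : Iv.card = deg s t v := by
    rw [hIv, Finset.card_union_of_disjoint hdisj, hIn, hO, deg, dIn, dOut]
    omega
  set d : ℕ := deg s t v with hdd
  have hdm : d ≤ Fintype.card E := by
    rw [← hd_eq, ← Finset.card_univ]
    exact Finset.card_le_card (Finset.subset_univ _)
  -- key computation for the symmDiff map
  have hkey : ∀ T ∈ F, ((symmDiff T O) ∩ Iv).card = dIn t T v + (bb - dOut s T v) := by
    intro T _
    have hset : (symmDiff T O) ∩ Iv = (T ∩ In) ∪ (O \ T) := by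
      ext e
      have hno : ¬(s e = v ∧ t e = v) := fun ⟨h1, h2⟩ => hst e (h1.trans h2.symm)
      simp only [Finset.mem_inter, Finset.mem_union, Finset.mem_sdiff, Finset.mem_symmDiff,
        hIv, hIn, hO, Finset.mem_filter, Finset.mem_univ, true_and]
      tauto
    rw [hset, Finset.card_union_of_disjoint]
    · have h1 : T ∩ In = T.filter fun e => t e = v := by
        ext e
        simp [hIn, Finset.mem_filter, Finset.mem_inter]
      have h2 : O ∩ T = T.filter fun e => s e = v := by
        ext e
        simp only [hO, Finset.mem_filter, Finset.mem_inter, Finset.mem_univ, true_and]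
        tauto
      have h3 : (O \ T).card + (O ∩ T).card = O.card := by
        rw [Finset.card_sdiff_add_card_inter]
      rw [dIn, dOut, ← h1, ← h2]
      omega
    · exact Finset.disjoint_of_subset_left Finset.inter_subset_right
        (Finset.disjoint_of_subset_right Finset.sdiff_subset hdisj)
  have hdoutle : ∀ T : Finset E, dOut s T v ≤ bb := by
    intro T
    rw [dOut, hbb, hO]
    exact Finset.card_le_card (Finset.filter_subset_filter _ (Finset.subset_univ T))
  -- target set
  set G : Finset (Finset E) := univ.filter
    (fun T => (T ∩ Iv).card = bb - 1 ∨ (T ∩ Iv).card = bb ∨ (T ∩ Iv).card = bb + 1) with hG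
  have hmaps : ∀ T ∈ F, symmDiff T O ∈ G := by
    intro T hT
    rw [hG, Finset.mem_filter]
    refine ⟨Finset.mem_univ _, ?_⟩
    have h1 := hkey T hT
    have h2 := hF T hT
    have h3 := hdoutle T
    omega
  have hinj : Set.InjOn (fun T => symmDiff T O) ↑F := by
    intro T1 _ T2 _ h
    have := congrArg (fun X => symmDiff X O) h
    simpa [symmDiff_symmDiff_cancel_right] using this
  have hcard1 : F.card ≤ G.card := Finset.card_le_card_of_injOn _ hmaps hinj
  -- split G into three
  have hGsub : G ⊆ (univ.filter fun T : Finset E => (T ∩ Iv).card = bb - 1) ∪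
      ((univ.filter fun T : Finset E => (T ∩ Iv).card = bb) ∪
       (univ.filter fun T : Finset E => (T ∩ Iv).card = bb + 1)) := by
    intro T hT
    rw [hG, Finset.mem_filter] at hT
    simp only [Finset.mem_union, Finset.mem_filter, Finset.mem_univ, true_and]
    tauto
  have hcard2 : G.card ≤
      (univ.filter fun T : Finset E => (T ∩ Iv).card = bb - 1).card +
      ((univ.filter fun T : Finset E => (T ∩ Iv).card = bb).card +
       (univ.filter fun T : Finset E => (T ∩ Iv).card = bb + 1).card) := by
    calc G.card ≤ _ := Finset.card_le_card hGsub
      _ ≤ _ := Finset.card_union_le _ _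
      _ ≤ _ := by
          gcongr
          exact Finset.card_union_le _ _
  have hj : ∀ j : ℕ, ((univ.filter fun T : Finset E => (T ∩ Iv).card = j).card : ℝ)
      ≤ 2 ^ (Fintype.card E) / Real.sqrt d := by
    intro j
    have h1 := card_filter_inter_card_le Iv j
    rw [hd_eq] at h1
    have h2 : ((univ.filter fun T : Finset E => (T ∩ Iv).card = j).card : ℝ)
        ≤ (d.choose j : ℝ) * 2 ^ (Fintype.card E - d) := by
      exact_mod_cast Nat.cast_le.mpr h1
    calc ((univ.filter fun T : Finset E => (T ∩ Iv).card = j).card : ℝ)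
        ≤ (d.choose j : ℝ) * 2 ^ (Fintype.card E - d) := h2
      _ ≤ (2 ^ d / Real.sqrt d) * 2 ^ (Fintype.card E - d) := by
          apply mul_le_mul_of_nonneg_right (choose_real_bound d j hd)
          positivity
      _ = 2 ^ (Fintype.card E) / Real.sqrt d := by
          rw [div_mul_eq_mul_div, ← pow_add]
          congr 2
          omega
  have h3 := hj (bb - 1)
  have h4 := hj bb
  have h5 := hj (bb + 1)
  have hcast : (F.card : ℝ) ≤ ((univ.filter fun T : Finset E => (T ∩ Iv).card = bb - 1).card : ℝ) +
      (((univ.filter fun T : Finset E => (T ∩ Iv).card = bb).card : ℝ) +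
       ((univ.filter fun T : Finset E => (T ∩ Iv).card = bb + 1).card : ℝ)) := by
    exact_mod_cast Nat.cast_le.mpr (le_trans hcard1 hcard2)
  calc (F.card : ℝ) ≤ _ := hcast
    _ ≤ 3 * 2 ^ (Fintype.card E) / Real.sqrt d := by
        rw [mul_div_assoc]
        linarith

end Aux

/-- There is a constant `C > 0` such that for every finite directed multigraph with
`m = |E| ≥ 2` edges, the number of trail-representable subsets of `E` is at most
`C · (√(log m)/√m) · 2^m`. -/
theorem trail_fraction_upper_bound :
    ∃ C : ℝ, 0 < C ∧
      ∀ (V E : Type) [Fintype V] [Fintype E] [DecidableEq E] (s t : E → V),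
        (∀ e : E, s e ≠ t e) →
        2 ≤ Fintype.card E →
        ({T : Finset E | IsTrail s t T}.ncard : ℝ) ≤
          C * (Real.sqrt (Real.log (Fintype.card E)) / Real.sqrt (Fintype.card E)) *
            2 ^ (Fintype.card E) := by
  refine ⟨100, by norm_num, ?_⟩
  intro V E _ _ _ s t hst hm
  classical
  set m : ℕ := Fintype.card E with hmdef
  set F : Finset (Finset E) := univ.filter (fun T => IsTrail s t T) with hF
  have hncard : ({T : Finset E | IsTrail s t T}.ncard : ℝ) = (F.card : ℝ) := by
    have hset : {T : Finset E | IsTrail s t T} = ↑F := by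
      ext T
      simp [hF]
    rw [hset, Set.ncard_coe_finset]
  rw [hncard]
  -- basic real facts
  have hm2 : (2 : ℝ) ≤ (m : ℝ) := by exact_mod_cast hm
  have hmpos : (0 : ℝ) < m := by linarith
  have hsqrtm : (0 : ℝ) < Real.sqrt m := Real.sqrt_pos.mpr hmpos
  have hlog2 : (0.6931471803 : ℝ) < Real.log 2 := Real.log_two_gt_d9
  have hL2 : Real.log 2 ≤ Real.log m := Real.log_le_log (by norm_num) hm2
  have hLpos : (0 : ℝ) < Real.log m := by linarith
  have hsqrtL : (0 : ℝ) < Real.sqrt (Real.log m) := Real.sqrt_pos.mpr hLpos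
  have hm2pow : (m : ℝ) ≤ 2 ^ m := by
    exact_mod_cast (Nat.lt_two_pow_self (n := m)).le
  have hsqrtm_le : Real.sqrt m ≤ (m : ℝ) := by
    nth_rewrite 2 [← Real.sqrt_sq hmpos.le]
    apply Real.sqrt_le_sqrt
    nlinarith
  -- max matching
  obtain ⟨M, hM, hcover⟩ := exists_max_matching s t
  set k : ℕ := M.card with hk
  have hEne : Nonempty E := by
    rw [← Fintype.card_pos_iff]
    omega
  have hMne : M.Nonempty := by
    obtain ⟨e⟩ := hEne
    obtain ⟨f, hfM, _⟩ := hcover e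
    exact ⟨f, hfM⟩
  have hk1 : 1 ≤ k := Finset.card_pos.mpr hMne
  have hkm : k ≤ m := by
    rw [hk, hmdef, ← Finset.card_univ]
    exact Finset.card_le_card (Finset.subset_univ M)
  by_cases hcase : (k : ℝ) ≤ 6 * Real.log m
  · -- low matching number: a vertex of high degree exists
    have hsum := card_le_sum_deg s t M hcover
    have hpigeon : ∃ f ∈ M, (m : ℝ) / k ≤ ((deg s t (s f) + deg s t (t f) : ℕ) : ℝ) := by
      apply Finset.exists_le_of_sum_le hMne
      have hconst : ∑ _f ∈ M, ((m : ℝ) / k) = (m : ℝ) := by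
        rw [Finset.sum_const, nsmul_eq_mul, ← hk]
        field_simp
      rw [hconst]
      calc (m : ℝ) ≤ ((∑ f ∈ M, (deg s t (s f) + deg s t (t f)) : ℕ) : ℝ) := by
            exact_mod_cast hsum
        _ = _ := by push_cast; rfl
    obtain ⟨f, hfM, hfdeg⟩ := hpigeon
    -- pick the endpoint with larger degree
    obtain ⟨v, hv⟩ : ∃ v : V, (m : ℝ) / (2 * k) ≤ (deg s t v : ℝ) := by
      rcases le_total (deg s t (s f)) (deg s t (t f)) with hle | hle
      · refine ⟨t f, ?_⟩
        push_cast at hfdeg ⊢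
        have : (deg s t (s f) : ℝ) ≤ (deg s t (t f) : ℝ) := by exact_mod_cast hle
        have hkR : (0 : ℝ) < (k : ℝ) := by exact_mod_cast hk1
        rw [div_le_iff₀ (by positivity)] at hfdeg ⊢
        nlinarith
      · refine ⟨s f, ?_⟩
        push_cast at hfdeg ⊢
        have : (deg s t (t f) : ℝ) ≤ (deg s t (s f) : ℝ) := by exact_mod_cast hle
        have hkR : (0 : ℝ) < (k : ℝ) := by exact_mod_cast hk1
        rw [div_le_iff₀ (by positivity)] at hfdeg ⊢
        nlinarith
    have hkR : (0 : ℝ) < (k : ℝ) := by exact_mod_cast hk1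
    have hdegpos : (0 : ℝ) < (deg s t v : ℝ) := by
      have : (0 : ℝ) < (m : ℝ) / (2 * k) := by positivity
      linarith
    have hdeg1 : 1 ≤ deg s t v := by
      by_contra hcon
      push_neg at hcon
      have hz : deg s t v = 0 := by omega
      rw [hz] at hdegpos
      simp at hdegpos
    have hc1 := case_one_bound s t hst v hdeg1 F ?_
    · -- numeric chain
      have hsq1 : Real.sqrt ((m : ℝ) / (2 * k)) ≤ Real.sqrt (deg s t v) :=
        Real.sqrt_le_sqrt hv
      have hsq2 : Real.sqrt ((m : ℝ) / (2 * k)) = Real.sqrt m / Real.sqrt (2 * k) := by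
        rw [Real.sqrt_div hmpos.le]
      have hsqkpos : (0 : ℝ) < Real.sqrt (2 * k) := by
        apply Real.sqrt_pos.mpr
        positivity
      have hsqmk : (0 : ℝ) < Real.sqrt ((m : ℝ) / (2 * k)) := by
        apply Real.sqrt_pos.mpr
        positivity
      have hchain1 : (F.card : ℝ) ≤ 3 * 2 ^ m / (Real.sqrt m / Real.sqrt (2 * k)) := by
        calc (F.card : ℝ) ≤ 3 * 2 ^ m / Real.sqrt (deg s t v) := hc1
          _ ≤ 3 * 2 ^ m / Real.sqrt ((m : ℝ) / (2 * k)) := by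
              apply div_le_div_of_nonneg_left (by positivity) hsqmk hsq1
          _ = _ := by rw [hsq2]
      have hchain2 : 3 * 2 ^ m / (Real.sqrt m / Real.sqrt (2 * k))
          = 3 * Real.sqrt (2 * k) * 2 ^ m / Real.sqrt m := by
        field_simp
      have hsqk_le : Real.sqrt (2 * k) ≤ Real.sqrt (12 * Real.log m) := by
        apply Real.sqrt_le_sqrt
        linarith
      have hsq12 : Real.sqrt (12 * Real.log m) ≤ 4 * Real.sqrt (Real.log m) := by
        rw [Real.sqrt_mul (by norm_num)]
        have : Real.sqrt 12 ≤ 4 := by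
          rw [show (4 : ℝ) = Real.sqrt 16 by
            rw [show (16 : ℝ) = 4 ^ 2 by norm_num, Real.sqrt_sq (by norm_num)]]
          exact Real.sqrt_le_sqrt (by norm_num)
        nlinarith [Real.sqrt_nonneg (Real.log m)]
      calc (F.card : ℝ) ≤ 3 * Real.sqrt (2 * k) * 2 ^ m / Real.sqrt m := by
            rw [← hchain2]; exact hchain1
        _ ≤ 3 * (4 * Real.sqrt (Real.log m)) * 2 ^ m / Real.sqrt m := by
            gcongr
            linarith
        _ ≤ 100 * (Real.sqrt (Real.log m) / Real.sqrt m) * 2 ^ m := by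
            have hrhs : 100 * (Real.sqrt (Real.log m) / Real.sqrt m) * 2 ^ m
                = (100 * Real.sqrt (Real.log m) * 2 ^ m) / Real.sqrt m := by ring
            have hlhs : 3 * (4 * Real.sqrt (Real.log m)) * 2 ^ m / Real.sqrt m
                = (12 * Real.sqrt (Real.log m) * 2 ^ m) / Real.sqrt m := by ring
            rw [hrhs, hlhs, div_le_div_iff₀ hsqrtm hsqrtm]
            have hX : (0:ℝ) ≤ Real.sqrt (Real.log m) * 2 ^ m * Real.sqrt m := by positivity
            nlinarith [hX]
    · -- hF for case_one_bound
      intro T hT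
      have hTr : IsTrail s t T := by
        rw [hF, Finset.mem_filter] at hT
        exact hT.2
      exact trail_diff s t hTr v
  · -- high matching number: union bound
    push_neg at hcase
    set Bset : V → V → Finset (Finset E) := fun a b => univ.filter
      (fun T => ∀ v, v ≠ a → v ≠ b → dIn t T v = dOut s T v) with hBset
    have hsubF : F ⊆ insert ∅ (((univ.image s) ×ˢ (univ.image t)).biUnion
        fun p => Bset p.1 p.2) := by
      intro T hT
      rw [Finset.mem_insert]
      by_cases hTe : T = ∅
      · left; exact hTe
      · right
        have hTr : IsTrail s t T := (Finset.mem_filter.mp hT).2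
        obtain ⟨a, b, ⟨e1, he1⟩, ⟨e2, he2⟩, hbal⟩ :=
          trail_balanced s t hTr (Finset.nonempty_iff_ne_empty.mpr hTe)
        rw [Finset.mem_biUnion]
        refine ⟨(a, b), ?_, ?_⟩
        · rw [Finset.mem_product]
          exact ⟨Finset.mem_image.mpr ⟨e1, Finset.mem_univ _, he1⟩,
            Finset.mem_image.mpr ⟨e2, Finset.mem_univ _, he2⟩⟩
        · rw [hBset]
          simp only
          rw [Finset.mem_filter]
          exact ⟨Finset.mem_univ _, hbal⟩
    have hcardF : F.card ≤ 1 + (m * m) * 2 ^ (m - (k - 1)) := by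
      calc F.card ≤ (insert ∅ (((univ.image s) ×ˢ (univ.image t)).biUnion
            fun p => Bset p.1 p.2)).card := Finset.card_le_card hsubF
        _ ≤ (((univ.image s) ×ˢ (univ.image t)).biUnion fun p => Bset p.1 p.2).card + 1 :=
            Finset.card_insert_le _ _
        _ ≤ (∑ p ∈ (univ.image s) ×ˢ (univ.image t), (Bset p.1 p.2).card) + 1 := by
            gcongr
            exact Finset.card_biUnion_le
        _ ≤ (∑ _p ∈ (univ.image s) ×ˢ (univ.image t), 2 ^ (m - (k - 1))) + 1 := by
            gcongr with p hp
            exact card_balanced_le s t hst M hM p.1 p.2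
        _ = ((univ.image s) ×ˢ (univ.image t)).card * 2 ^ (m - (k - 1)) + 1 := by
            rw [Finset.sum_const, smul_eq_mul]
        _ ≤ (m * m) * 2 ^ (m - (k - 1)) + 1 := by
            gcongr
            rw [Finset.card_product]
            have h1 : (univ.image s).card ≤ m := le_trans (Finset.card_image_le) (by
              rw [hmdef, Finset.card_univ])
            have h2 : (univ.image t).card ≤ m := le_trans (Finset.card_image_le) (by
              rw [hmdef, Finset.card_univ])
            exact Nat.mul_le_mul h1 h2
        _ = 1 + (m * m) * 2 ^ (m - (k - 1)) := by ring
    -- pass to the reals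
    have hexp : m - (k - 1) = m + 1 - k := by omega
    have hpow : (2 : ℝ) ^ (m - (k - 1)) = 2 ^ (m + 1) / 2 ^ k := by
      rw [hexp, eq_div_iff (by positivity : ((2:ℝ)^k) ≠ 0), ← pow_add]
      congr 1
      omega
    have h2k : (m : ℝ) ^ 3 ≤ (2 : ℝ) ^ k := by
      have e1 : (2 : ℝ) ^ k = Real.exp (Real.log 2 * k) := by
        rw [← Real.rpow_natCast 2 k, Real.rpow_def_of_pos (by norm_num)]
      have e2 : (m : ℝ) ^ 3 = Real.exp (3 * Real.log m) := by
        rw [show (3 : ℝ) * Real.log m = Real.log ((m:ℝ) ^ 3) by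
          rw [Real.log_pow]; push_cast; ring]
        rw [Real.exp_log (by positivity)]
      rw [e1, e2]
      apply Real.exp_le_exp.mpr
      nlinarith [hcase, hlog2, hLpos]
    have hm3pos : (0 : ℝ) < (m : ℝ) ^ 3 := by positivity
    have hstep : ((m : ℝ) * m) * ((2:ℝ) ^ (m + 1) / 2 ^ k) ≤ 2 * 2 ^ m / m := by
      have h1 : ((m : ℝ) * m) * ((2:ℝ) ^ (m + 1) / 2 ^ k)
          ≤ ((m : ℝ) * m) * ((2:ℝ) ^ (m + 1) / (m : ℝ) ^ 3) := by
        apply mul_le_mul_of_nonneg_left _ (by positivity)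
        exact div_le_div_of_nonneg_left (by positivity) hm3pos h2k
      calc ((m : ℝ) * m) * ((2:ℝ) ^ (m + 1) / 2 ^ k) ≤ _ := h1
        _ = 2 * 2 ^ m / m := by
            rw [pow_succ]
            field_simp
    have hone : (1 : ℝ) ≤ 2 ^ m / Real.sqrt m := by
      rw [le_div_iff₀ hsqrtm, one_mul]
      exact hsqrtm_le.trans hm2pow
    have htwo : 2 * 2 ^ m / m ≤ 2 * 2 ^ m / Real.sqrt m := by
      apply div_le_div_of_nonneg_left (by positivity) hsqrtm hsqrtm_le
    have hfinal : (F.card : ℝ) ≤ 3 * 2 ^ m / Real.sqrt m := by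
      have hc : (F.card : ℝ) ≤ 1 + ((m : ℝ) * m) * (2:ℝ) ^ (m - (k - 1)) := by
        exact_mod_cast Nat.cast_le.mpr hcardF
      rw [hpow] at hc
      have := le_trans hc (by linarith [hstep] :
        (1 : ℝ) + ((m : ℝ) * m) * ((2:ℝ) ^ (m + 1) / 2 ^ k) ≤ 1 + 2 * 2 ^ m / Real.sqrt m)
      calc (F.card : ℝ) ≤ 1 + 2 * 2 ^ m / Real.sqrt m := this
        _ ≤ 2 ^ m / Real.sqrt m + 2 * 2 ^ m / Real.sqrt m := by linarith [hone]
        _ = 3 * 2 ^ m / Real.sqrt m := by ring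
    have hsqL : (0.8 : ℝ) ≤ Real.sqrt (Real.log m) := by
      rw [show (0.8 : ℝ) = Real.sqrt 0.64 by
        rw [show (0.64 : ℝ) = 0.8 ^ 2 by norm_num, Real.sqrt_sq (by norm_num)]]
      apply Real.sqrt_le_sqrt
      linarith
    calc (F.card : ℝ) ≤ 3 * 2 ^ m / Real.sqrt m := hfinal
      _ ≤ 100 * (Real.sqrt (Real.log m) / Real.sqrt m) * 2 ^ m := by
          have hrhs : 100 * (Real.sqrt (Real.log m) / Real.sqrt m) * 2 ^ m
              = (100 * Real.sqrt (Real.log m) * 2 ^ m) / Real.sqrt m := by ring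
          rw [hrhs, div_le_div_iff₀ hsqrtm hsqrtm]
          have hX : (0:ℝ) ≤ 2 ^ m * Real.sqrt m := by positivity
          nlinarith [mul_le_mul_of_nonneg_right hsqL hX, hX]
end

section
/- Let G = (V, E) be a finite directed multigraph in which every vertex is incident to at least one edge. Then there exists an edge-increasing sequence of vertices of length at least |V|/2. -/
/-- The set of edges incident to at least one vertex of `U`, in a directed multigraph
given by source and target maps `s t : E → V`. -/
def Incident {V E : Type*} (s t : E → V) (U : Set V) : Set E :=
  {e | s e ∈ U ∨ t e ∈ U}

/-- A sequence `v 0, …, v (r-1)` of distinct vertices is edge-increasing if for each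
`i`, the edges incident to `v (i+1)` are not all incident to one of `v 0, …, v i`. -/
def EdgeIncreasing {V E : Type*} (s t : E → V) {r : ℕ} (v : Fin r → V) : Prop :=
  Function.Injective v ∧
    ∀ (i : ℕ) (h : i + 1 < r),
      ¬ (Incident s t {v ⟨i + 1, h⟩} ⊆
          Incident s t (v '' {j : Fin r | (j : ℕ) ≤ i}))

open Finset

attribute [local instance] Classical.propDecidable

section Aux

variable {V E : Type} [Fintype V] [Fintype E]

/-- An edge is "good" (w.r.t. removed vertices `a`, `b`) if none of its endpoints is
`a` or `b`. -/
def Pg (s t : E → V) (a b : V) (e : E) : Prop :=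
  s e ≠ a ∧ s e ≠ b ∧ t e ≠ a ∧ t e ≠ b

/-- A vertex is "good" if it is incident to a good edge. -/
def Gd (s t : E → V) (a b x : V) : Prop :=
  ∃ e, (s e = x ∨ t e = x) ∧ Pg s t a b e

/-- Isolated (not good, not `a`, not `b`) vertices joined to `c` by an edge. -/
noncomputable def Xc (s t : E → V) (a b c : V) : Finset V :=
  Finset.univ.filter fun x => x ≠ a ∧ x ≠ b ∧ ¬ Gd s t a b x ∧
    ∃ e, (s e = x ∧ t e = c) ∨ (t e = x ∧ s e = c)

lemma Pg_swap (s t : E → V) (a b : V) (e : E) : Pg t s b a e ↔ Pg s t a b e := by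
  unfold Pg; tauto

lemma Gd_swap (s t : E → V) (a b x : V) : Gd t s b a x ↔ Gd s t a b x := by
  unfold Gd
  constructor <;> rintro ⟨e, he, hp⟩
  · exact ⟨e, he.symm, (Pg_swap s t a b e).mp hp⟩
  · exact ⟨e, he.symm, (Pg_swap s t a b e).mpr hp⟩

lemma Xc_swap (s t : E → V) (a b c : V) : Xc t s b a c = Xc s t a b c := by
  unfold Xc
  apply Finset.filter_congr
  intro x _
  simp only [Gd_swap]
  constructor <;> rintro ⟨h1, h2, h3, e, h4⟩
  · exact ⟨h2, h1, h3, e, h4.symm⟩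
  · exact ⟨h2, h1, h3, e, h4.symm⟩

lemma Incident_swap {V E : Type*} (s t : E → V) (U : Set V) :
    Incident t s U = Incident s t U :=
  Set.ext fun _ => or_comm

lemma EdgeIncreasing_swap (s t : E → V) {r : ℕ} (v : Fin r → V) :
    EdgeIncreasing t s v ↔ EdgeIncreasing s t v := by
  unfold EdgeIncreasing
  simp only [Incident_swap]

lemma step (s t : E → V) (hst : ∀ e, s e ≠ t e)
    (hinc : ∀ x : V, ∃ e, s e = x ∨ t e = x) (e0 : E)
    (hX : (Xc s t (s e0) (t e0) (s e0)).card ≤ (Xc s t (s e0) (t e0) (t e0)).card)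
    (IH : ∀ (V' E' : Type) [Fintype V'] [Fintype E'] (s' t' : E' → V'),
      Fintype.card V' + 2 ≤ Fintype.card V → (∀ e, s' e ≠ t' e) →
      (∀ x, ∃ e, s' e = x ∨ t' e = x) →
      ∃ (r : ℕ) (w : Fin r → V'), Fintype.card V' ≤ 2 * r ∧ EdgeIncreasing s' t' w) :
    ∃ (r : ℕ) (v : Fin r → V), Fintype.card V ≤ 2 * r ∧ EdgeIncreasing s t v := by
  classical
  set a := s e0 with ha
  set b := t e0 with hb
  have hab : a ≠ b := hst e0
  have hGa : ¬ Gd s t a b a := by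
    rintro ⟨e, he, hp⟩
    rcases he with h | h
    · exact hp.1 h
    · exact hp.2.2.1 h
  have hGb : ¬ Gd s t a b b := by
    rintro ⟨e, he, hp⟩
    rcases he with h | h
    · exact hp.2.1 h
    · exact hp.2.2.2 h
  have hGne : ∀ x y : V, Gd s t a b x → ¬ Gd s t a b y → x ≠ y :=
    fun x y h1 h2 hxy => h2 (hxy ▸ h1)
  -- cardinality of good vertices
  have hcardGd : Fintype.card {x : V // Gd s t a b x} + 2 ≤ Fintype.card V := by
    have h1 : Fintype.card {x : V // Gd s t a b x}
        = (Finset.univ.filter (Gd s t a b)).card := Fintype.card_subtype _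
    have hbnot : b ∉ Finset.univ.filter (Gd s t a b) := by
      simp only [mem_filter]; tauto
    have hanot : a ∉ insert b (Finset.univ.filter (Gd s t a b)) := by
      simp only [mem_insert, mem_filter]; tauto
    have h2 : (insert a (insert b (Finset.univ.filter (Gd s t a b)))).card
        ≤ Fintype.card V := by
      rw [← Finset.card_univ]
      exact card_le_card (subset_univ _)
    rw [Finset.card_insert_of_notMem hanot, Finset.card_insert_of_notMem hbnot] at h2
    omega
  obtain ⟨r', v', hcard', hinj', hEI'⟩ :=
    IH {x : V // Gd s t a b x} {e : E // Pg s t a b e}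
      (fun e => ⟨s e.1, e.1, Or.inl rfl, e.2⟩) (fun e => ⟨t e.1, e.1, Or.inr rfl, e.2⟩)
      hcardGd
      (fun e h => hst e.1 (congrArg Subtype.val h))
      (fun x => by
        obtain ⟨e, he, hp⟩ := x.2
        refine ⟨⟨e, hp⟩, ?_⟩
        rcases he with h | h
        · exact Or.inl (Subtype.ext h)
        · exact Or.inr (Subtype.ext h))
  set Xb := Xc s t a b b with hXbdef
  set m := Xb.card with hm
  have ebx : Fin m ≃ {x // x ∈ Xb} := Xb.equivFin.symm
  have hXbfact : ∀ x : V, x ∈ Xb →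
      x ≠ a ∧ x ≠ b ∧ ¬ Gd s t a b x ∧
        ∃ e, (s e = x ∧ t e = b) ∨ (t e = x ∧ s e = b) :=
    fun x hx => (Finset.mem_filter.mp hx).2
  -- the sequence
  set v : Fin (r' + 1 + m) → V := fun i =>
    if h : (i : ℕ) < r' then (v' ⟨i, h⟩).1
    else if h2 : (i : ℕ) = r' then a
    else ((ebx ⟨(i : ℕ) - (r' + 1), by have := i.isLt; omega⟩ : {x // x ∈ Xb}) : V)
    with hvdef
  have hv1 : ∀ (i : Fin (r' + 1 + m)) (h : (i : ℕ) < r'), v i = (v' ⟨i, h⟩).1 :=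
    fun i h => dif_pos h
  have hv2 : ∀ (i : Fin (r' + 1 + m)), (i : ℕ) = r' → v i = a := by
    intro i h2
    have h : ¬ (i : ℕ) < r' := by omega
    exact (dif_neg h).trans (dif_pos h2)
  have hv3 : ∀ (i : Fin (r' + 1 + m)) (h : r' < (i : ℕ)),
      v i = ((ebx ⟨(i : ℕ) - (r' + 1), by have := i.isLt; omega⟩ : {x // x ∈ Xb}) : V) := by
    intro i h
    have h1 : ¬ (i : ℕ) < r' := by omega
    have h2 : ¬ (i : ℕ) = r' := by omega
    exact (dif_neg h1).trans (dif_neg h2)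
  have hGv : ∀ j, Gd s t a b (v' j).1 := fun j => (v' j).2
  -- `b` is not in the range of `v`
  have hvnb : ∀ i, v i ≠ b := by
    intro i
    rcases Nat.lt_trichotomy (i : ℕ) r' with h | h | h
    · rw [hv1 i h]; exact hGne _ _ (hGv _) hGb
    · rw [hv2 i h]; exact hab
    · rw [hv3 i h]; exact (hXbfact _ (ebx _).2).2.1
  -- injectivity
  have hinj : Function.Injective v := by
    have H : ∀ i j : Fin (r' + 1 + m), (i : ℕ) < (j : ℕ) → v i ≠ v j := by
      intro i j hij
      rcases Nat.lt_trichotomy (j : ℕ) r' with hj | hj | hj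
      · have hi : (i : ℕ) < r' := by omega
        rw [hv1 i hi, hv1 j hj]
        intro hx
        have := hinj' (Subtype.ext hx)
        have : (i : ℕ) = (j : ℕ) := congrArg (fun z : Fin r' => (z : ℕ)) this
        omega
      · have hi : (i : ℕ) < r' := by omega
        rw [hv1 i hi, hv2 j hj]
        exact hGne _ _ (hGv _) hGa
      · rcases Nat.lt_trichotomy (i : ℕ) r' with hi | hi | hi
        · rw [hv1 i hi, hv3 j hj]
          exact hGne _ _ (hGv _) (hXbfact _ (ebx _).2).2.2.1
        · rw [hv2 i hi, hv3 j hj]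
          intro hx; exact (hXbfact _ (ebx _).2).1 hx.symm
        · rw [hv3 i hi, hv3 j hj]
          intro hx
          have h1 := ebx.injective (Subtype.ext hx)
          have h2 : (i : ℕ) - (r' + 1) = (j : ℕ) - (r' + 1) :=
            congrArg (fun z : Fin m => (z : ℕ)) h1
          omega
    intro i j hij
    rcases Nat.lt_trichotomy (i : ℕ) (j : ℕ) with h | h | h
    · exact absurd hij (H i j h)
    · exact Fin.ext h
    · exact absurd hij.symm (H j i h)
  -- cardinality bound
  have hcard : Fintype.card V ≤ 2 * (r' + 1 + m) := by
    set S := Finset.univ.filter (Gd s t a b) with hS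
    set Iso := Finset.univ.filter
      (fun x => x ≠ a ∧ x ≠ b ∧ ¬ Gd s t a b x) with hIso
    have hsub : (Finset.univ : Finset V) ⊆ insert a (insert b (S ∪ Iso)) := by
      intro x _
      by_cases hxa : x = a
      · simp [hxa]
      by_cases hxb : x = b
      · simp [hxb]
      by_cases hxg : Gd s t a b x
      · simp [mem_insert, mem_union, hS, mem_filter, hxg]
      · simp [mem_insert, mem_union, hIso, mem_filter, hxa, hxb, hxg]
    have h1 : Fintype.card V ≤ 2 + (S.card + Iso.card) := by
      calc Fintype.card V = (Finset.univ : Finset V).card := (Finset.card_univ).symm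
        _ ≤ (insert a (insert b (S ∪ Iso))).card := card_le_card hsub
        _ ≤ (insert b (S ∪ Iso)).card + 1 := card_insert_le _ _
        _ ≤ (S ∪ Iso).card + 1 + 1 := by
            have := card_insert_le b (S ∪ Iso); omega
        _ ≤ 2 + (S.card + Iso.card) := by
            have := card_union_le S Iso; omega
    have hIsoXaXb : Iso ⊆ Xc s t a b a ∪ Xb := by
      intro x hx
      rw [hIso, mem_filter] at hx
      obtain ⟨-, hxa, hxb, hxg⟩ := hx
      obtain ⟨e, he⟩ := hinc x
      have hnp : ¬ Pg s t a b e := fun hp => hxg ⟨e, he, hp⟩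
      have hnp' : s e = a ∨ s e = b ∨ t e = a ∨ t e = b := by
        by_contra hcon
        push_neg at hcon
        exact hnp ⟨hcon.1, hcon.2.1, hcon.2.2.1, hcon.2.2.2⟩
      rw [mem_union]
      rcases he with h | h
      · have h1 : s e ≠ a := fun hq => hxa (h.symm.trans hq)
        have h2 : s e ≠ b := fun hq => hxb (h.symm.trans hq)
        have h3 : t e = a ∨ t e = b := by tauto
        rcases h3 with h3 | h3
        · exact Or.inl (by
            rw [Xc, mem_filter]
            exact ⟨mem_univ _, hxa, hxb, hxg, e, Or.inl ⟨h, h3⟩⟩)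
        · exact Or.inr (by
            rw [hXbdef, Xc, mem_filter]
            exact ⟨mem_univ _, hxa, hxb, hxg, e, Or.inl ⟨h, h3⟩⟩)
      · have h1 : t e ≠ a := fun hq => hxa (h.symm.trans hq)
        have h2 : t e ≠ b := fun hq => hxb (h.symm.trans hq)
        have h3 : s e = a ∨ s e = b := by tauto
        rcases h3 with h3 | h3
        · exact Or.inl (by
            rw [Xc, mem_filter]
            exact ⟨mem_univ _, hxa, hxb, hxg, e, Or.inr ⟨h, h3⟩⟩)
        · exact Or.inr (by
            rw [hXbdef, Xc, mem_filter]
            exact ⟨mem_univ _, hxa, hxb, hxg, e, Or.inr ⟨h, h3⟩⟩)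
    have h2 : Iso.card ≤ 2 * m := by
      calc Iso.card ≤ (Xc s t a b a ∪ Xb).card := card_le_card hIsoXaXb
        _ ≤ (Xc s t a b a).card + Xb.card := card_union_le _ _
        _ ≤ 2 * m := by rw [hm]; omega
    have h3 : S.card ≤ 2 * r' := by
      have : Fintype.card {x : V // Gd s t a b x} = S.card := Fintype.card_subtype _
      omega
    omega
  -- helper for non-membership in the incident set of a prefix
  have hnotmem : ∀ (i : ℕ) (e : E),
      (∀ j : Fin (r' + 1 + m), (j : ℕ) ≤ i → s e ≠ v j ∧ t e ≠ v j) →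
      e ∉ Incident s t (v '' {j : Fin (r' + 1 + m) | (j : ℕ) ≤ i}) := by
    intro i e h hmem
    rcases hmem with hm' | hm' <;> obtain ⟨j, hj, hje⟩ := hm'
    · exact (h j hj).1 hje.symm
    · exact (h j hj).2 hje.symm
  refine ⟨r' + 1 + m, v, hcard, hinj, ?_⟩
  intro i hi
  rcases Nat.lt_trichotomy (i + 1) r' with hA | hB | hC
  · -- inherited from the subgraph sequence
    obtain ⟨e', he'1, he'2⟩ := Set.not_subset.mp (hEI' i hA)
    refine Set.not_subset.mpr ⟨e'.1, ?_, hnotmem i e'.1 ?_⟩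
    · have hvv : v ⟨i + 1, hi⟩ = (v' ⟨i + 1, hA⟩).1 := hv1 _ hA
      rcases he'1 with h | h
      · exact Or.inl (by rw [hvv]; exact congrArg Subtype.val h)
      · exact Or.inr (by rw [hvv]; exact congrArg Subtype.val h)
    · intro j hj
      have hjr : (j : ℕ) < r' := by omega
      rw [hv1 j hjr]
      constructor
      · intro hx
        exact he'2 (Or.inl ⟨⟨(j : ℕ), hjr⟩, hj, (Subtype.ext hx).symm⟩)
      · intro hx
        exact he'2 (Or.inr ⟨⟨(j : ℕ), hjr⟩, hj, (Subtype.ext hx).symm⟩)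
  · -- the vertex `a`, witnessed by `e0`
    refine Set.not_subset.mpr ⟨e0, ?_, hnotmem i e0 ?_⟩
    · exact Or.inl (by rw [hv2 ⟨i + 1, hi⟩ hB]; exact ha.symm)
    · intro j hj
      have hjr : (j : ℕ) < r' := by omega
      rw [hv1 j hjr]
      constructor
      · intro hx
        exact hGne _ _ (hGv ⟨(j : ℕ), hjr⟩) hGa hx.symm
      · intro hx
        exact hGne _ _ (hGv ⟨(j : ℕ), hjr⟩) hGb hx.symm
  · -- a vertex of `Xb`, witnessed by its edge to `b`
    have hvk := hv3 ⟨i + 1, hi⟩ hC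
    obtain ⟨hxa, hxb2, hxg, e, hex⟩ := hXbfact _ (ebx ⟨(i : ℕ) + 1 - (r' + 1), by omega⟩).2
    refine Set.not_subset.mpr ⟨e, ?_, hnotmem i e ?_⟩
    · rcases hex with ⟨h1, h2⟩ | ⟨h1, h2⟩
      · exact Or.inl (by rw [hvk]; exact h1)
      · exact Or.inr (by rw [hvk]; exact h1)
    · intro j hj
      have hne : v j ≠ v ⟨i + 1, hi⟩ := by
        intro hx
        have := hinj hx
        have : (j : ℕ) = i + 1 := congrArg (fun z : Fin (r' + 1 + m) => (z : ℕ)) this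
        omega
      rcases hex with ⟨h1, h2⟩ | ⟨h1, h2⟩
      · constructor
        · intro hx; exact hne (by rw [hvk, ← h1, hx])
        · intro hx; exact hvnb j (by rw [← hx, h2])
      · constructor
        · intro hx; exact hvnb j (by rw [← hx, h2])
        · intro hx; exact hne (by rw [hvk, ← h1, hx])
  
lemma aux (n : ℕ) : ∀ (V E : Type) [Fintype V] [Fintype E] (s t : E → V),
    Fintype.card V ≤ n → (∀ e, s e ≠ t e) → (∀ x, ∃ e, s e = x ∨ t e = x) →
    ∃ (r : ℕ) (v : Fin r → V), Fintype.card V ≤ 2 * r ∧ EdgeIncreasing s t v := by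
  induction n with
  | zero =>
    intro V E _ _ s t hc _ _
    exact ⟨0, fun i => i.elim0, by omega,
      fun i => i.elim0, fun i h => absurd h (by omega)⟩
  | succ n ih =>
    intro V E _ _ s t hc hst hinc
    by_cases hV : Fintype.card V = 0
    · exact ⟨0, fun i => i.elim0, by omega,
        fun i => i.elim0, fun i h => absurd h (by omega)⟩
    · have hne : Nonempty V := Fintype.card_pos_iff.mp (by omega)
      obtain ⟨x⟩ := hne
      obtain ⟨e0, -⟩ := hinc x
      have IH' : ∀ (V' E' : Type) [Fintype V'] [Fintype E'] (s' t' : E' → V'),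
          Fintype.card V' + 2 ≤ Fintype.card V → (∀ e, s' e ≠ t' e) →
          (∀ x, ∃ e, s' e = x ∨ t' e = x) →
          ∃ (r : ℕ) (w : Fin r → V'), Fintype.card V' ≤ 2 * r ∧ EdgeIncreasing s' t' w :=
        fun V' E' _ _ s' t' h2 => ih V' E' s' t' (by omega)
      by_cases hcmp : (Xc s t (s e0) (t e0) (s e0)).card ≤ (Xc s t (s e0) (t e0) (t e0)).card
      · exact step s t hst hinc e0 hcmp IH'
      · obtain ⟨r, v, h1, h2⟩ := step t s (fun e => (hst e).symm)
          (fun y => (hinc y).imp fun e he => he.symm) e0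
          (by rw [Xc_swap s t (s e0) (t e0) (t e0), Xc_swap s t (s e0) (t e0) (s e0)]; omega) IH'
        exact ⟨r, v, h1, (EdgeIncreasing_swap s t v).mp h2⟩

end Aux

/-- In a finite directed multigraph in which every vertex is incident to at least one
edge, there is an edge-increasing sequence of vertices of length at least `|V|/2`. -/
theorem exists_edge_increasing_sequence
    (V E : Type) [Fintype V] [Fintype E] (s t : E → V)
    (hst : ∀ e : E, s e ≠ t e)
    (hinc : ∀ v : V, ∃ e : E, s e = v ∨ t e = v) :
    ∃ (r : ℕ) (v : Fin r → V), Fintype.card V ≤ 2 * r ∧ EdgeIncreasing s t v := by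
  exact aux (Fintype.card V) V E s t le_rfl hst hinc
end

section
/- Let G = (V, E) be a finite directed multigraph with m = |E| edges, and let v ∈ V be a vertex with in-degree δ⁻(v, E) = c ≥ 1. Then the number of subsets T ⊆ E satisfying |δ⁺(v, T) − δ⁻(v, T)| ≤ 1 is at most 3 · C(c, ⌊c/2⌋) · 2^{m−c}, where C(·,·) denotes the binomial coefficient. -/
/-- The out-degree `δ⁺(v, T)` of a vertex `v` with respect to a subset `T` of edges. -/
def outDeg {V E : Type*} [DecidableEq V] (s : E → V) (T : Finset E) (v : V) : ℕ :=
  (T.filter fun e => s e = v).card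

/-- The in-degree `δ⁻(v, T)` of a vertex `v` with respect to a subset `T` of edges. -/
def inDeg {V E : Type*} [DecidableEq V] (t : E → V) (T : Finset E) (v : V) : ℕ :=
  (T.filter fun e => t e = v).card

/-- In a finite directed multigraph with `m` edges, if `v` has in-degree `c ≥ 1`,
then the number of subsets `T ⊆ E` with `|δ⁺(v, T) − δ⁻(v, T)| ≤ 1` is at most
`3 · C(c, ⌊c/2⌋) · 2^(m−c)`. -/
theorem count_nearly_balanced_subsets_le
    (V E : Type) [Fintype V] [Fintype E] [DecidableEq V]
    (s t : E → V) (hst : ∀ e : E, s e ≠ t e)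
    (v : V) (c : ℕ) (hc : inDeg t Finset.univ v = c) (hc1 : 1 ≤ c) :
    {T : Finset E | |(outDeg s T v : ℤ) - (inDeg t T v : ℤ)| ≤ 1}.ncard ≤
      3 * c.choose (c / 2) * 2 ^ (Fintype.card E - c) := by
  classical
  set A : Finset E := Finset.univ.filter (fun e => t e = v) with hA
  have hcardA : A.card = c := hc
  have hncard : {T : Finset E | |(outDeg s T v : ℤ) - (inDeg t T v : ℤ)| ≤ 1}.ncard
      = (Finset.univ.filter
          (fun T : Finset E => |(outDeg s T v : ℤ) - (inDeg t T v : ℤ)| ≤ 1)).card := by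
    rw [Set.ncard_eq_toFinset_card', Set.toFinset_setOf]
  rw [hncard]
  have hAc : Aᶜ.card = Fintype.card E - c := by
    rw [Finset.card_compl, hcardA]
  have key : (Finset.univ.filter
        (fun T : Finset E => |(outDeg s T v : ℤ) - (inDeg t T v : ℤ)| ≤ 1)).card
      ≤ (3 * c.choose (c / 2)) * Aᶜ.powerset.card := by
    apply Finset.card_le_mul_card_image_of_maps_to (f := fun T => T \ A)
    · intro T _
      rw [Finset.mem_powerset]
      intro e he
      simp only [Finset.mem_sdiff] at he
      simpa using he.2
    · intro B hB
      rw [Finset.mem_powerset] at hB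
      set k : ℕ := (B.filter fun e => s e = v).card with hk
      -- target set
      set Q : Finset (Finset E) :=
        (A.powersetCard (k - 1) ∪ A.powersetCard k) ∪ A.powersetCard (k + 1) with hQ
      have hQcard : Q.card ≤ 3 * c.choose (c / 2) := by
        calc Q.card ≤ (A.powersetCard (k - 1) ∪ A.powersetCard k).card
              + (A.powersetCard (k + 1)).card := Finset.card_union_le _ _
          _ ≤ ((A.powersetCard (k - 1)).card + (A.powersetCard k).card)
              + (A.powersetCard (k + 1)).card := by
              exact Nat.add_le_add_right (Finset.card_union_le _ _) _
          _ ≤ 3 * c.choose (c / 2) := by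
              rw [Finset.card_powersetCard, Finset.card_powersetCard,
                Finset.card_powersetCard, hcardA]
              have h1 := Nat.choose_le_middle (k - 1) c
              have h2 := Nat.choose_le_middle k c
              have h3 := Nat.choose_le_middle (k + 1) c
              omega
      refine le_trans ?_ hQcard
      apply Finset.card_le_card_of_injOn (fun T => T ∩ A)
      · intro T hT
        simp only [Finset.mem_coe, Finset.mem_filter, Finset.mem_univ, true_and] at hT
        obtain ⟨habs, hTB⟩ := hT
        -- outDeg s T v = k
        have hout : outDeg s T v = k := by
          rw [outDeg, hk]
          congr 1
          ext e
          simp only [Finset.mem_filter, ← hTB, Finset.mem_sdiff, hA,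
            Finset.mem_filter, Finset.mem_univ, true_and]
          constructor
          · rintro ⟨he, hsv⟩
            refine ⟨⟨he, ?_⟩, hsv⟩
            intro htv
            exact hst e (hsv.trans htv.symm)
          · rintro ⟨⟨he, _⟩, hsv⟩
            exact ⟨he, hsv⟩
        -- inDeg t T v = (T ∩ A).card
        have hin : inDeg t T v = (T ∩ A).card := by
          rw [inDeg]
          congr 1
          ext e
          simp [hA, Finset.mem_inter]
        rw [hout, hin] at habs
        rw [abs_le] at habs
        have hrange : (T ∩ A).card = k - 1 ∨ (T ∩ A).card = k ∨ (T ∩ A).card = k + 1 := by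
          omega
        have hsub : T ∩ A ⊆ A := Finset.inter_subset_right
        rw [hQ]
        simp only [Finset.mem_coe, Finset.mem_union, Finset.mem_powersetCard]
        rcases hrange with h | h | h
        · exact Or.inl (Or.inl ⟨hsub, h⟩)
        · exact Or.inl (Or.inr ⟨hsub, h⟩)
        · exact Or.inr ⟨hsub, h⟩
      · intro T1 h1 T2 h2 heq
        simp only [Finset.coe_filter, Set.mem_setOf_eq, Finset.mem_univ, true_and] at h1 h2
        simp only [] at heq
        have e1 : T1 = (T1 ∩ A) ∪ B := by
          rw [← h1.2]; ext e; simp only [Finset.mem_union, Finset.mem_inter,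
            Finset.mem_sdiff]; tauto
        have e2 : T2 = (T2 ∩ A) ∪ B := by
          rw [← h2.2]; ext e; simp only [Finset.mem_union, Finset.mem_inter,
            Finset.mem_sdiff]; tauto
        rw [e1, e2, heq]
  calc _ ≤ (3 * c.choose (c / 2)) * Aᶜ.powerset.card := key
    _ = 3 * c.choose (c / 2) * 2 ^ (Fintype.card E - c) := by
        rw [Finset.card_powerset, hAc]
end

section
/- Let G = (V, E) be a finite directed multigraph with m = |E| edges, and let v_1, …, v_r (r ≥ 2) be an edge-increasing sequence of vertices. Then the number of subsets T ⊆ E for which δ⁺(v_i, T) = δ⁻(v_i, T) holds for at least r − 2 of the indices i ∈ {1, …, r} is at most 4r² · 2^{m−r}. -/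
section Aux

variable {V E : Type} [DecidableEq V] [DecidableEq E]

/-- Toggling a single edge incident to `w` destroys balance at `w`. -/
lemma toggle_false (s t : E → V) (hst : ∀ e : E, s e ≠ t e) {w : V} {e0 : E}
    (he0 : s e0 = w ∨ t e0 = w) {T1 T2 : Finset E}
    (hagree : ∀ e, (s e = w ∨ t e = w) → e ≠ e0 → (e ∈ T1 ↔ e ∈ T2))
    (h1 : e0 ∈ T1) (h2 : e0 ∉ T2)
    (hb1 : outDeg s T1 w = inDeg t T1 w)
    (hb2 : outDeg s T2 w = inDeg t T2 w) : False := by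
  unfold outDeg inDeg at hb1 hb2
  rcases he0 with hs0 | ht0
  · have htne : t e0 ≠ w := fun h => hst e0 (hs0.trans h.symm)
    have hout : T1.filter (fun e => s e = w) = insert e0 (T2.filter (fun e => s e = w)) := by
      ext e
      by_cases he : e = e0
      · subst he; simp [h1, hs0]
      · simp only [Finset.mem_filter, Finset.mem_insert, he, false_or]
        constructor
        · rintro ⟨hT, hse⟩; exact ⟨(hagree e (Or.inl hse) he).1 hT, hse⟩
        · rintro ⟨hT, hse⟩; exact ⟨(hagree e (Or.inl hse) he).2 hT, hse⟩
    have hin : T1.filter (fun e => t e = w) = T2.filter (fun e => t e = w) := by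
      ext e
      by_cases he : e = e0
      · subst he; simp [htne]
      · simp only [Finset.mem_filter]
        constructor
        · rintro ⟨hT, hte⟩; exact ⟨(hagree e (Or.inr hte) he).1 hT, hte⟩
        · rintro ⟨hT, hte⟩; exact ⟨(hagree e (Or.inr hte) he).2 hT, hte⟩
    have hnm : e0 ∉ T2.filter (fun e => s e = w) := by simp [h2]
    rw [hout, Finset.card_insert_of_notMem hnm, hin] at hb1
    omega
  · have hsne : s e0 ≠ w := fun h => hst e0 (h.trans ht0.symm)
    have hin : T1.filter (fun e => t e = w) = insert e0 (T2.filter (fun e => t e = w)) := by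
      ext e
      by_cases he : e = e0
      · subst he; simp [h1, ht0]
      · simp only [Finset.mem_filter, Finset.mem_insert, he, false_or]
        constructor
        · rintro ⟨hT, hte⟩; exact ⟨(hagree e (Or.inr hte) he).1 hT, hte⟩
        · rintro ⟨hT, hte⟩; exact ⟨(hagree e (Or.inr hte) he).2 hT, hte⟩
    have hout : T1.filter (fun e => s e = w) = T2.filter (fun e => s e = w) := by
      ext e
      by_cases he : e = e0
      · subst he; simp [hsne]
      · simp only [Finset.mem_filter]
        constructor
        · rintro ⟨hT, hse⟩; exact ⟨(hagree e (Or.inl hse) he).1 hT, hse⟩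
        · rintro ⟨hT, hse⟩; exact ⟨(hagree e (Or.inl hse) he).2 hT, hse⟩
    have hnm : e0 ∉ T2.filter (fun e => t e = w) := by simp [h2]
    rw [hout, hin, Finset.card_insert_of_notMem hnm] at hb1
    omega

/-- Key counting lemma: the number of edge sets balanced outside `A` is at most
`2 ^ (m - |J_A|)`, where `J_A` is the set of positive indices outside `A`. -/
lemma key_count [Fintype E] (s t : E → V) (hst : ∀ e : E, s e ≠ t e)
    {r : ℕ} (v : Fin r → V) (g : Fin r → E)
    (hg1 : ∀ i : Fin r, 0 < (i : ℕ) → s (g i) = v i ∨ t (g i) = v i)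
    (hg2 : ∀ i : Fin r, 0 < (i : ℕ) → ∀ j : Fin r, j < i → s (g i) ≠ v j ∧ t (g i) ≠ v j)
    (A : Finset (Fin r)) :
    (Finset.univ.filter fun T : Finset E =>
        ∀ i ∉ A, outDeg s T (v i) = inDeg t T (v i)).card
      ≤ 2 ^ (Fintype.card E -
          (Finset.univ.filter fun i : Fin r => 0 < (i : ℕ) ∧ i ∉ A).card) := by
  classical
  set J : Finset (Fin r) := Finset.univ.filter fun i : Fin r => 0 < (i : ℕ) ∧ i ∉ A with hJ
  set D : Finset E := J.image g with hD
  have hginj : ∀ i ∈ J, ∀ i' ∈ J, g i = g i' → i = i' := by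
    intro i hi i' hi' hgg
    by_contra hne
    have hi0 : 0 < (i : ℕ) := ((Finset.mem_filter.mp hi).2).1
    have hi'0 : 0 < (i' : ℕ) := ((Finset.mem_filter.mp hi').2).1
    rcases lt_or_gt_of_ne hne with hlt | hgt
    · have h2 := hg2 i' hi'0 i hlt
      have h1 := hg1 i hi0
      rw [hgg] at h1
      tauto
    · have h2 := hg2 i hi0 i' hgt
      have h1 := hg1 i' hi'0
      rw [← hgg] at h1
      tauto
  have hDcard : D.card = J.card := Finset.card_image_of_injOn hginj
  have hmain : (Finset.univ.filter fun T : Finset E =>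
      ∀ i ∉ A, outDeg s T (v i) = inDeg t T (v i)).card
        ≤ ((Finset.univ \ D).powerset).card := by
    apply Finset.card_le_card_of_injOn (fun T => T \ D)
    · intro T _
      exact Finset.mem_powerset.mpr (Finset.sdiff_subset_sdiff (Finset.subset_univ T) le_rfl)
    · intro T1 hT1 T2 hT2 hsd
      have hb1 := (Finset.mem_filter.mp (Finset.mem_coe.mp hT1)).2
      have hb2 := (Finset.mem_filter.mp (Finset.mem_coe.mp hT2)).2
      simp only at hsd
      -- claim by strong induction on index value
      have claim : ∀ n : ℕ, ∀ i : Fin r, i ∈ J → (i : ℕ) = n → (g i ∈ T1 ↔ g i ∈ T2) := by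
        intro n
        induction n using Nat.strong_induction_on with
        | _ n IH =>
          intro i hiJ hin
          have hi0 : 0 < (i : ℕ) := ((Finset.mem_filter.mp hiJ).2).1
          have hiA : i ∉ A := ((Finset.mem_filter.mp hiJ).2).2
          by_contra hne
          have hagree : ∀ e, (s e = v i ∨ t e = v i) → e ≠ g i → (e ∈ T1 ↔ e ∈ T2) := by
            intro e hinc hne'
            by_cases heD : e ∈ D
            · obtain ⟨j, hjJ, rfl⟩ := Finset.mem_image.mp heD
              have hj0 : 0 < (j : ℕ) := ((Finset.mem_filter.mp hjJ).2).1
              have hji : j ≠ i := fun h => hne' (by rw [h])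
              rcases lt_or_gt_of_ne hji with hlt | hgt
              · exact IH (j : ℕ) (by omega) j hjJ rfl
              · have := hg2 j hj0 i hgt
                tauto
            · constructor
              · intro h
                have : e ∈ T1 \ D := Finset.mem_sdiff.mpr ⟨h, heD⟩
                rw [hsd] at this
                exact (Finset.mem_sdiff.mp this).1
              · intro h
                have : e ∈ T2 \ D := Finset.mem_sdiff.mpr ⟨h, heD⟩
                rw [← hsd] at this
                exact (Finset.mem_sdiff.mp this).1
          by_cases hm1 : g i ∈ T1
          · by_cases hm2 : g i ∈ T2
            · exact hne ⟨fun _ => hm2, fun _ => hm1⟩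
            · exact toggle_false s t hst (hg1 i hi0) hagree hm1 hm2 (hb1 i hiA) (hb2 i hiA)
          · by_cases hm2 : g i ∈ T2
            · exact toggle_false s t hst (hg1 i hi0)
                (fun e hinc hne' => (hagree e hinc hne').symm)
                hm2 hm1 (hb2 i hiA) (hb1 i hiA)
            · exact hne ⟨fun h => absurd h hm1, fun h => absurd h hm2⟩
      ext e
      by_cases heD : e ∈ D
      · obtain ⟨j, hjJ, rfl⟩ := Finset.mem_image.mp heD
        exact claim (j : ℕ) j hjJ rfl
      · constructor
        · intro h
          have : e ∈ T1 \ D := Finset.mem_sdiff.mpr ⟨h, heD⟩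
          rw [hsd] at this
          exact (Finset.mem_sdiff.mp this).1
        · intro h
          have : e ∈ T2 \ D := Finset.mem_sdiff.mpr ⟨h, heD⟩
          rw [← hsd] at this
          exact (Finset.mem_sdiff.mp this).1
  calc (Finset.univ.filter fun T : Finset E =>
      ∀ i ∉ A, outDeg s T (v i) = inDeg t T (v i)).card
      ≤ ((Finset.univ \ D).powerset).card := hmain
    _ = 2 ^ ((Finset.univ \ D).card) := Finset.card_powerset _
    _ = 2 ^ (Fintype.card E - J.card) := by
        rw [Finset.card_sdiff_of_subset (Finset.subset_univ D), Finset.card_univ, hDcard]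

end Aux

/-- If a finite directed multigraph with `m` edges has an edge-increasing sequence
`v 0, …, v (r-1)` with `r ≥ 2`, then the number of subsets `T ⊆ E` that balance the
in- and out-degrees of at least `r − 2` of the vertices `v i` is at most
`4r² · 2^(m−r)`. -/
theorem count_mostly_balanced_subsets_le
    (V E : Type) [Fintype V] [Fintype E] [DecidableEq V]
    (s t : E → V) (hst : ∀ e : E, s e ≠ t e)
    (r : ℕ) (hr : 2 ≤ r) (v : Fin r → V) (hv : EdgeIncreasing s t v) :
    ({T : Finset E |
        r - 2 ≤ {i : Fin r | outDeg s T (v i) = inDeg t T (v i)}.ncard}.ncard : ℝ) ≤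
      4 * (r : ℝ) ^ 2 * (2 : ℝ) ^ ((Fintype.card E : ℤ) - (r : ℤ)) := by
  classical
  obtain ⟨hinj, hincr⟩ := hv
  set m := Fintype.card E with hm
  -- E is nonempty
  have hEne : Nonempty E := by
    have h0 := hincr 0 hr
    rw [Set.not_subset] at h0
    obtain ⟨e, _, _⟩ := h0
    exact ⟨e⟩
  inhabit E
  -- choose distinguished edges
  have hex : ∀ i : Fin r, 0 < (i : ℕ) →
      ∃ e : E, (s e = v i ∨ t e = v i) ∧
        ∀ j : Fin r, j < i → s e ≠ v j ∧ t e ≠ v j := by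
    intro i hi
    obtain ⟨k, hk⟩ : ∃ k, (i : ℕ) = k + 1 := ⟨(i : ℕ) - 1, by omega⟩
    have hk1 : k + 1 < r := hk ▸ i.isLt
    have h := hincr k hk1
    rw [Set.not_subset] at h
    obtain ⟨e, he1, he2⟩ := h
    have hvi : (⟨k + 1, hk1⟩ : Fin r) = i := by
      apply Fin.ext; simp [hk]
    refine ⟨e, ?_, ?_⟩
    · have : s e = v ⟨k + 1, hk1⟩ ∨ t e = v ⟨k + 1, hk1⟩ := by
        simpa [Incident] using he1
      rwa [hvi] at this
    · intro j hj
      have hjk : (j : ℕ) ≤ k := by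
        have := hj
        rw [Fin.lt_def] at this
        omega
      constructor
      · intro hcon
        exact he2 (Or.inl ⟨j, hjk, hcon.symm⟩)
      · intro hcon
        exact he2 (Or.inr ⟨j, hjk, hcon.symm⟩)
  set g : Fin r → E := fun i =>
    if h : 0 < (i : ℕ) then (hex i h).choose else default with hgdef
  have hg1 : ∀ i : Fin r, 0 < (i : ℕ) → s (g i) = v i ∨ t (g i) = v i := by
    intro i hi
    simp only [hgdef, dif_pos hi]
    exact (hex i hi).choose_spec.1
  have hg2 : ∀ i : Fin r, 0 < (i : ℕ) → ∀ j : Fin r, j < i →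
      s (g i) ≠ v j ∧ t (g i) ≠ v j := by
    intro i hi j hj
    simp only [hgdef, dif_pos hi]
    exact (hex i hi).choose_spec.2 j hj
  -- the set of positive indices has card r - 1 and injects into E
  set K : Finset (Fin r) := Finset.univ.filter fun i : Fin r => 0 < (i : ℕ) with hK
  have hKcard : K.card = r - 1 := by
    have h1 : (Finset.univ.filter fun i : Fin r => ¬ 0 < (i : ℕ)).card = 1 := by
      have : (Finset.univ.filter fun i : Fin r => ¬ 0 < (i : ℕ))
          = {(⟨0, by omega⟩ : Fin r)} := by
        ext i
        simp only [Finset.mem_filter, Finset.mem_univ, true_and, Finset.mem_singleton]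
        constructor
        · intro h; apply Fin.ext; simpa using by omega
        · intro h; subst h; simp
      rw [this, Finset.card_singleton]
    have h2 := Finset.card_filter_add_card_filter_not
      (s := (Finset.univ : Finset (Fin r))) (p := fun i : Fin r => 0 < (i : ℕ))
    rw [Finset.card_univ, Fintype.card_fin, ← hK] at h2
    omega
  have hginjK : ∀ i ∈ K, ∀ i' ∈ K, g i = g i' → i = i' := by
    intro i hi i' hi' hgg
    by_contra hne
    have hi0 : 0 < (i : ℕ) := (Finset.mem_filter.mp hi).2
    have hi'0 : 0 < (i' : ℕ) := (Finset.mem_filter.mp hi').2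
    rcases lt_or_gt_of_ne hne with hlt | hgt
    · have h2 := hg2 i' hi'0 i hlt
      have h1 := hg1 i hi0
      rw [hgg] at h1
      tauto
    · have h2 := hg2 i hi0 i' hgt
      have h1 := hg1 i' hi'0
      rw [← hgg] at h1
      tauto
  have hrm : r - 1 ≤ m := by
    have := Finset.card_le_card_of_injOn g (fun i _ => Finset.mem_univ (g i)) hginjK
    rwa [hKcard, Finset.card_univ] at this
  -- rewrite ncards as Finset cards
  have hset : ({T : Finset E |
      r - 2 ≤ {i : Fin r | outDeg s T (v i) = inDeg t T (v i)}.ncard}.ncard)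
      = (Finset.univ.filter fun T : Finset E =>
          r - 2 ≤ (Finset.univ.filter fun i : Fin r =>
            outDeg s T (v i) = inDeg t T (v i)).card).card := by
    simp_rw [Set.ncard_eq_toFinset_card', Set.toFinset_setOf]
  rw [hset]
  -- cover by balanced-outside-A families over 2-element A
  set M := Finset.univ.filter fun T : Finset E =>
      r - 2 ≤ (Finset.univ.filter fun i : Fin r =>
        outDeg s T (v i) = inDeg t T (v i)).card with hM
  have hsub : M ⊆ (Finset.powersetCard 2 (Finset.univ : Finset (Fin r))).biUnion
      (fun A => Finset.univ.filter fun T : Finset E =>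
        ∀ i ∉ A, outDeg s T (v i) = inDeg t T (v i)) := by
    intro T hT
    have hT' := (Finset.mem_filter.mp hT).2
    have hsplit := Finset.card_filter_add_card_filter_not
      (s := (Finset.univ : Finset (Fin r)))
      (p := fun i : Fin r => outDeg s T (v i) = inDeg t T (v i))
    rw [Finset.card_univ, Fintype.card_fin] at hsplit
    have hU2 : (Finset.univ.filter fun i : Fin r =>
        ¬ outDeg s T (v i) = inDeg t T (v i)).card ≤ 2 := by omega
    obtain ⟨A, hUA, hAu, hA2⟩ := Finset.exists_subsuperset_card_eq
      (Finset.subset_univ (Finset.univ.filter fun i : Fin r =>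
        ¬ outDeg s T (v i) = inDeg t T (v i))) hU2
      (by rw [Finset.card_univ, Fintype.card_fin]; exact hr)
    refine Finset.mem_biUnion.mpr ⟨A, Finset.mem_powersetCard.mpr ⟨hAu, hA2⟩, ?_⟩
    refine Finset.mem_filter.mpr ⟨Finset.mem_univ T, fun i hiA => ?_⟩
    by_contra hcon
    exact hiA (hUA (Finset.mem_filter.mpr ⟨Finset.mem_univ i, hcon⟩))
  have hcardM : M.card ≤ r.choose 2 * 2 ^ (m - (r - 3)) := by
    calc M.card ≤ ((Finset.powersetCard 2 (Finset.univ : Finset (Fin r))).biUnion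
        (fun A => Finset.univ.filter fun T : Finset E =>
          ∀ i ∉ A, outDeg s T (v i) = inDeg t T (v i))).card :=
        Finset.card_le_card hsub
      _ ≤ ∑ A ∈ Finset.powersetCard 2 (Finset.univ : Finset (Fin r)),
          (Finset.univ.filter fun T : Finset E =>
            ∀ i ∉ A, outDeg s T (v i) = inDeg t T (v i)).card :=
        Finset.card_biUnion_le
      _ ≤ ∑ A ∈ Finset.powersetCard 2 (Finset.univ : Finset (Fin r)),
          2 ^ (m - (r - 3)) := by
        apply Finset.sum_le_sum
        intro A hA
        have hA2 : A.card = 2 := (Finset.mem_powersetCard.mp hA).2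
        have hkey := key_count s t hst v g hg1 hg2 A
        refine hkey.trans (Nat.pow_le_pow_right (by norm_num) ?_)
        apply Nat.sub_le_sub_left
        -- r - 3 ≤ card J_A
        have hJK : K \ A ⊆ Finset.univ.filter fun i : Fin r => 0 < (i : ℕ) ∧ i ∉ A := by
          intro i hi
          rw [Finset.mem_sdiff] at hi
          exact Finset.mem_filter.mpr
            ⟨Finset.mem_univ i, (Finset.mem_filter.mp hi.1).2, hi.2⟩
        have h1 : K.card - A.card ≤ (K \ A).card := Finset.le_card_sdiff A K
        have h2 := Finset.card_le_card hJK
        omega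
      _ = r.choose 2 * 2 ^ (m - (r - 3)) := by
        rw [Finset.sum_const, Finset.card_powersetCard, Finset.card_univ,
          Fintype.card_fin, smul_eq_mul]
  -- the purely arithmetic finish
  have hchoose : 2 * r.choose 2 = r * (r - 1) := by
    rw [Nat.choose_two_right, mul_comm]
    exact Nat.div_mul_cancel (Nat.even_mul_pred_self r).two_dvd
  have hnat : M.card * 2 ^ r ≤ 4 * r ^ 2 * 2 ^ m := by
    calc M.card * 2 ^ r ≤ (r.choose 2 * 2 ^ (m - (r - 3))) * 2 ^ r :=
        Nat.mul_le_mul_right _ hcardM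
      _ = r.choose 2 * 2 ^ (m - (r - 3) + r) := by rw [mul_assoc, pow_add]
      _ ≤ r.choose 2 * 2 ^ (m + 3) := by
        apply Nat.mul_le_mul_left
        apply Nat.pow_le_pow_right (by norm_num)
        omega
      _ = (2 * r.choose 2) * (4 * 2 ^ m) := by rw [pow_add]; ring
      _ = (r * (r - 1)) * (4 * 2 ^ m) := by rw [hchoose]
      _ ≤ (r * r) * (4 * 2 ^ m) := by
        apply Nat.mul_le_mul_right
        exact Nat.mul_le_mul_left r (Nat.sub_le r 1)
      _ = 4 * r ^ 2 * 2 ^ m := by ring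
  -- convert to ℝ
  have h2r : (0 : ℝ) < (2 : ℝ) ^ (r : ℤ) := by positivity
  have hz : (2 : ℝ) ^ ((m : ℤ) - (r : ℤ)) = 2 ^ (m : ℤ) / 2 ^ (r : ℤ) :=
    zpow_sub₀ (by norm_num) _ _
  rw [hz, mul_div_assoc', le_div_iff₀ h2r,
    show ((2 : ℝ) ^ (r : ℤ) = (2 : ℝ) ^ r) from zpow_natCast 2 r,
    show ((2 : ℝ) ^ (m : ℤ) = (2 : ℝ) ^ m) from zpow_natCast 2 m]
  exact_mod_cast hnat
end

section
/- Let n ≥ 1 and let G(2n) be the directed multigraph with two vertices and n edges in each direction between them. Then the total number d(G(2n)) of trail-representable subsets of its edge set is at least C(2n, n) − 1, where C(2n, n) is the central binomial coefficient. -/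
def Gsrc (n : ℕ) : Fin n ⊕ Fin n → Bool :=
  Sum.elim (fun _ => false) (fun _ => true)

def Gtgt (n : ℕ) : Fin n ⊕ Fin n → Bool :=
  Sum.elim (fun _ => true) (fun _ => false)

namespace TrailAux

def inter {α β : Type*} : List α → List β → List (α ⊕ β)
  | [], _ => []
  | _ :: _, [] => []
  | a :: as, b :: bs => .inl a :: .inr b :: inter as bs

lemma mem_inter_inl {α β : Type*} {as : List α} {bs : List β} {x : α}
    (h : Sum.inl x ∈ inter as bs) : x ∈ as := by
  induction as generalizing bs with
  | nil => simp [inter] at h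
  | cons a as ih =>
    cases bs with
    | nil => simp [inter] at h
    | cons b bs =>
      simp only [inter, List.mem_cons] at h
      rcases h with h | h | h
      · simp [Sum.inl.injEq] at h; simp [h]
      · simp at h
      · exact List.mem_cons_of_mem _ (ih h)

lemma mem_inter_inr {α β : Type*} {as : List α} {bs : List β} {x : β}
    (h : Sum.inr x ∈ inter as bs) : x ∈ bs := by
  induction as generalizing bs with
  | nil => simp [inter] at h
  | cons a as ih =>
    cases bs with
    | nil => simp [inter] at h
    | cons b bs =>
      simp only [inter, List.mem_cons] at h
      rcases h with h | h | h
      · simp at h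
      · simp [Sum.inr.injEq] at h; simp [h]
      · exact List.mem_cons_of_mem _ (ih h)

lemma inl_mem_inter {α β : Type*} {as : List α} {bs : List β} {x : α}
    (hlen : as.length = bs.length) (hx : x ∈ as) : Sum.inl x ∈ inter as bs := by
  induction as generalizing bs with
  | nil => simp at hx
  | cons a as ih =>
    cases bs with
    | nil => simp at hlen
    | cons b bs =>
      simp only [List.length_cons, Nat.succ.injEq] at hlen
      rcases List.mem_cons.mp hx with h | h
      · simp [inter, h]
      · simp [inter, ih hlen h]

lemma inr_mem_inter {α β : Type*} {as : List α} {bs : List β} {x : β}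
    (hlen : as.length = bs.length) (hx : x ∈ bs) : Sum.inr x ∈ inter as bs := by
  induction as generalizing bs with
  | nil => cases bs <;> simp_all
  | cons a as ih =>
    cases bs with
    | nil => simp at hx
    | cons b bs =>
      simp only [List.length_cons, Nat.succ.injEq] at hlen
      rcases List.mem_cons.mp hx with h | h
      · simp [inter, h]
      · simp [inter, ih hlen h]

lemma nodup_inter {α β : Type*} {as : List α} {bs : List β}
    (ha : as.Nodup) (hb : bs.Nodup) : (inter as bs).Nodup := by
  induction as generalizing bs with
  | nil => simp [inter]
  | cons a as ih =>
    cases bs with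
    | nil => simp [inter]
    | cons b bs =>
      simp only [List.nodup_cons] at ha hb
      refine List.Nodup.cons ?_ (List.Nodup.cons ?_ (ih ha.2 hb.2))
      · intro h
        rcases List.mem_cons.mp h with h | h
        · simp at h
        · exact ha.1 (mem_inter_inl h)
      · intro h
        exact hb.1 (mem_inter_inr h)

lemma chain_inter {n : ℕ} {as bs : List (Fin n)} (b : Fin n) :
    List.Chain' (fun e f => Gtgt n e = Gsrc n f) (Sum.inr b :: inter as bs) := by
  induction as generalizing bs b with
  | nil => simp [inter, List.Chain', List.isChain_singleton]
  | cons a as ih =>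
    cases bs with
    | nil => simp [inter, List.Chain', List.isChain_singleton]
    | cons b' bs =>
      simp only [inter]
      refine List.IsChain.cons_cons (by simp [Gsrc, Gtgt]) ?_
      refine List.IsChain.cons_cons (by simp [Gsrc, Gtgt]) (ih b')

lemma chain_inter' {n : ℕ} (as bs : List (Fin n)) :
    List.Chain' (fun e f => Gtgt n e = Gsrc n f) (inter as bs) := by
  cases as with
  | nil => simp [inter, List.Chain', List.isChain_nil]
  | cons a as =>
    cases bs with
    | nil => simp [inter, List.Chain', List.isChain_nil]
    | cons b bs =>
      exact List.IsChain.cons_cons (by simp [Gsrc, Gtgt]) (chain_inter b)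

def g {n : ℕ} (A B : Finset (Fin n)) : Finset (Fin n ⊕ Fin n) :=
  A.map ⟨Sum.inl, Sum.inl_injective⟩ ∪ B.map ⟨Sum.inr, Sum.inr_injective⟩

@[simp] lemma mem_g_inl {n : ℕ} {A B : Finset (Fin n)} {x : Fin n} :
    Sum.inl x ∈ g A B ↔ x ∈ A := by simp [g]

@[simp] lemma mem_g_inr {n : ℕ} {A B : Finset (Fin n)} {x : Fin n} :
    Sum.inr x ∈ g A B ↔ x ∈ B := by simp [g]

lemma card_g {n : ℕ} (A B : Finset (Fin n)) : (g A B).card = A.card + B.card := by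
  rw [g, Finset.card_union_of_disjoint, Finset.card_map, Finset.card_map]
  simp [Finset.disjoint_left]

lemma isTrail_g {n : ℕ} {A B : Finset (Fin n)} (h : A.card = B.card) :
    IsTrail (Gsrc n) (Gtgt n) (g A B) := by
  refine ⟨inter A.toList B.toList,
    nodup_inter A.nodup_toList B.nodup_toList, ?_, chain_inter' _ _⟩
  have hlen : A.toList.length = B.toList.length := by
    rw [Finset.length_toList, Finset.length_toList, h]
  ext e
  cases e with
  | inl x =>
    simp only [List.mem_toFinset, mem_g_inl]
    exact ⟨fun h' => Finset.mem_toList.mp (mem_inter_inl h'),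
      fun h' => inl_mem_inter hlen (Finset.mem_toList.mpr h')⟩
  | inr x =>
    simp only [List.mem_toFinset, mem_g_inr]
    exact ⟨fun h' => Finset.mem_toList.mp (mem_inter_inr h'),
      fun h' => inr_mem_inter hlen (Finset.mem_toList.mpr h')⟩

def lpart {n : ℕ} (T : Finset (Fin n ⊕ Fin n)) : Finset (Fin n) :=
  Finset.univ.filter (fun i => Sum.inl i ∈ T)

def rpart {n : ℕ} (T : Finset (Fin n ⊕ Fin n)) : Finset (Fin n) :=
  Finset.univ.filter (fun i => Sum.inr i ∈ T)

lemma g_parts {n : ℕ} (T : Finset (Fin n ⊕ Fin n)) : g (lpart T) (rpart T) = T := by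
  ext e
  cases e <;> simp [lpart, rpart]

end TrailAux

open TrailAux
/-- For `n ≥ 1`, the graph `G(2n)` (two vertices, `n` edges in each direction) has
at least `C(2n, n) − 1` trail-representable subsets of edges. -/
theorem trail_count_ge_central_binom_sub_one
    (n : ℕ) (hn : 1 ≤ n) :
    (2 * n).choose n - 1 ≤
      {T : Finset (Fin n ⊕ Fin n) | IsTrail (Gsrc n) (Gtgt n) T}.ncard := by
  set S : Set (Finset (Fin n ⊕ Fin n)) := {T | IsTrail (Gsrc n) (Gtgt n) T} with hS
  set P : Finset (Finset (Fin n ⊕ Fin n)) :=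
    Finset.powersetCard n (Finset.univ) with hP
  set f : Finset (Fin n ⊕ Fin n) → Finset (Fin n ⊕ Fin n) :=
    fun T => g (lpart T) ((rpart T)ᶜ) with hf
  have hsum : ∀ T ∈ P, (lpart T).card + (rpart T).card = n := by
    intro T hT
    have := Finset.mem_powersetCard.mp hT
    rw [← card_g, g_parts, this.2]
  have hbal : ∀ T ∈ P, (lpart T).card = ((rpart T)ᶜ).card := by
    intro T hT
    have h1 := hsum T hT
    have h2 : ((rpart T)ᶜ).card = n - (rpart T).card := by
      rw [Finset.card_compl, Fintype.card_fin]
    omega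
  have hmem : ∀ T ∈ P, f T ∈ S := fun T hT => isTrail_g (hbal T hT)
  have hinj : Set.InjOn f P := by
    intro T hT T' hT' hEq
    have hl : lpart T = lpart T' := by
      ext x
      have := Finset.ext_iff.mp hEq (Sum.inl x)
      simpa [hf] using this
    have hr : rpart T = rpart T' := by
      have : (rpart T)ᶜ = (rpart T')ᶜ := by
        ext x
        have := Finset.ext_iff.mp hEq (Sum.inr x)
        simpa [hf] using this
      exact compl_injective this
    rw [← g_parts T, ← g_parts T', hl, hr]
  have hcardP : P.card = (2 * n).choose n := by
    rw [hP, Finset.card_powersetCard, Finset.card_univ]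
    congr 1
    simp [two_mul]
  have hcard : (P.image f).card = (2 * n).choose n := by
    rw [Finset.card_image_of_injOn hinj, hcardP]
  have hsub : (↑(P.image f) : Set _) ⊆ S := by
    intro T hT
    simp only [Finset.coe_image, Set.mem_image, Finset.mem_coe] at hT
    obtain ⟨T', hT', rfl⟩ := hT
    exact hmem T' hT'
  calc (2 * n).choose n - 1 ≤ (2 * n).choose n := Nat.sub_le _ _
    _ = (P.image f).card := hcard.symm
    _ = (↑(P.image f) : Set _).ncard := (Set.ncard_coe_finset _).symm
    _ ≤ S.ncard := Set.ncard_le_ncard hsub (Set.toFinite S)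
end

section
/- There exists a constant c > 0 such that for every n ≥ 1, the directed multigraph G(2n) with two vertices and n edges in each direction, having m = 2n edges, satisfies f(G(2n)) = d(G(2n))/2^m ≥ c/√m. In particular, the upper bound O(√(log m)/√m) on the trail-fraction is tight up to a factor of √(log m). -/
/-- Interleave two lists, starting with the first. -/
def ilv {α : Type*} : List α → List α → List α
  | [], l' => l'
  | a :: l, l' => a :: ilv l' l
termination_by l l' => l.length + l'.length

lemma ilv_nil {α : Type*} (l' : List α) : ilv [] l' = l' := by rw [ilv]

lemma ilv_cons {α : Type*} (a : α) (l l' : List α) : ilv (a :: l) l' = a :: ilv l' l := by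
  rw [ilv]

lemma ilv_perm {α : Type*} : ∀ l l' : List α, (ilv l l').Perm (l ++ l')
  | [], l' => by simp [ilv_nil]
  | a :: l, l' => by
      rw [ilv_cons]
      refine ((ilv_perm l' l).cons a).trans ?_
      exact (List.perm_append_comm).cons a
termination_by l l' => l.length + l'.length

lemma ilv_chain {α : Type*} (R : α → α → Prop) :
    ∀ l l' : List α, l'.length ≤ l.length → l.length ≤ l'.length + 1 →
      (∀ e ∈ l, ∀ f ∈ l', R e f) → (∀ f ∈ l', ∀ e ∈ l, R f e) →
      (ilv l l').Chain' R
  | [], l', h1, _, _, _ => by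
      have : l' = [] := List.eq_nil_of_length_eq_zero (Nat.le_zero.mp (by simpa using h1))
      simp [this, ilv_nil]
      exact List.isChain_nil
  | a :: l, l', h1, h2, H, H' => by
      rw [ilv_cons, show List.Chain' R (a :: ilv l' l) = List.IsChain R (a :: ilv l' l) from rfl,
        List.isChain_cons]
      constructor
      · intro y hy
        cases l' with
        | nil =>
            have : l = [] := List.eq_nil_of_length_eq_zero (by simpa using h2)
            simp [this, ilv_nil] at hy
        | cons b l'' =>
            rw [ilv_cons] at hy
            obtain rfl : y = b := by simpa using hy.symm
            exact H a (by simp) y (by simp)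
      · exact ilv_chain R l' l (by simpa using h2) (by simpa using h1)
          (fun f hf e he => H' f hf e (by simp [he]))
          (fun e he f hf => H e (by simp [he]) f hf)
termination_by l l' => l.length + l'.length

/-- Balanced subsets are trails. -/
lemma balanced_isTrail {n : ℕ} (T : Finset (Fin n ⊕ Fin n))
    (h : (T.filter (fun e => e.isLeft)).card = (T.filter (fun e => e.isRight)).card) :
    IsTrail (Gsrc n) (Gtgt n) T := by
  classical
  set l₁ := (T.filter (fun e => e.isLeft)).toList with hl₁
  set l₂ := (T.filter (fun e => e.isRight)).toList with hl₂
  have hmem₁ : ∀ e ∈ l₁, e ∈ T ∧ ∃ i, e = Sum.inl i := by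
    intro e he
    have h' := Finset.mem_filter.mp (Finset.mem_toList.mp he)
    exact ⟨h'.1, Sum.isLeft_iff.mp h'.2⟩
  have hmem₂ : ∀ e ∈ l₂, e ∈ T ∧ ∃ i, e = Sum.inr i := by
    intro e he
    have h' := Finset.mem_filter.mp (Finset.mem_toList.mp he)
    exact ⟨h'.1, Sum.isRight_iff.mp h'.2⟩
  have hlen : l₂.length = l₁.length := by
    simp only [hl₁, hl₂, Finset.length_toList]
    omega
  have hperm := ilv_perm l₁ l₂
  refine ⟨ilv l₁ l₂, ?_, ?_, ?_⟩
  · rw [hperm.nodup_iff]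
    refine List.Nodup.append (Finset.nodup_toList _) (Finset.nodup_toList _) ?_
    intro e he1 he2
    obtain ⟨i, rfl⟩ := (hmem₁ e he1).2
    obtain ⟨j, hj⟩ := (hmem₂ _ he2).2
    exact Sum.inl_ne_inr hj
  · ext x
    simp only [List.mem_toFinset, hperm.mem_iff, List.mem_append]
    constructor
    · rintro (hx | hx)
      · exact (hmem₁ x hx).1
      · exact (hmem₂ x hx).1
    · intro hx
      cases x with
      | inl i =>
          refine Or.inl (Finset.mem_toList.mpr (Finset.mem_filter.mpr ⟨hx, by simp⟩))
      | inr i =>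
          refine Or.inr (Finset.mem_toList.mpr (Finset.mem_filter.mpr ⟨hx, by simp⟩))
  · refine ilv_chain _ l₁ l₂ (le_of_eq hlen) (by omega) ?_ ?_
    · intro e he f hf
      obtain ⟨i, hi⟩ := (hmem₁ e he).2
      obtain ⟨j, hj⟩ := (hmem₂ f hf).2
      subst hi hj
      simp [Gsrc, Gtgt]
    · intro f hf e he
      obtain ⟨i, hi⟩ := (hmem₁ e he).2
      obtain ⟨j, hj⟩ := (hmem₂ f hf).2
      subst hi hj
      simp [Gsrc, Gtgt]

/-- The injection from `n`-element subsets into trail sets. -/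
noncomputable def psi (n : ℕ) (S : Finset (Fin n ⊕ Fin n)) : Finset (Fin n ⊕ Fin n) :=
  (S.filter (fun e => e.isLeft)) ∪ ((Finset.univ.filter (fun e => e.isRight)) \ S)

lemma psi_mem_inl {n : ℕ} (S : Finset (Fin n ⊕ Fin n)) (i : Fin n) :
    Sum.inl i ∈ psi n S ↔ Sum.inl i ∈ S := by
  simp [psi]

lemma psi_mem_inr {n : ℕ} (S : Finset (Fin n ⊕ Fin n)) (i : Fin n) :
    Sum.inr i ∈ psi n S ↔ Sum.inr i ∉ S := by
  simp [psi]

lemma psi_injective (n : ℕ) : Function.Injective (psi n) := by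
  intro S S' hSS
  ext x
  cases x with
  | inl i => rw [← psi_mem_inl S i, ← psi_mem_inl S' i, hSS]
  | inr i =>
      have := congrArg (fun T => Sum.inr i ∈ T) hSS
      simp only [psi_mem_inr, eq_iff_iff] at this
      tauto

lemma card_filter_isRight_univ (n : ℕ) :
    ((Finset.univ : Finset (Fin n ⊕ Fin n)).filter (fun e => e.isRight)).card = n := by
  classical
  have : (Finset.univ : Finset (Fin n ⊕ Fin n)).filter (fun e => e.isRight)
      = Finset.univ.map ⟨Sum.inr, Sum.inr_injective⟩ := by
    ext x
    cases x <;> simp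
  simp [this]

lemma psi_balanced {n : ℕ} (S : Finset (Fin n ⊕ Fin n)) (hS : S.card = n) :
    ((psi n S).filter (fun e => e.isLeft)).card
      = ((psi n S).filter (fun e => e.isRight)).card := by
  classical
  have h1 : (psi n S).filter (fun e => e.isLeft) = S.filter (fun e => e.isLeft) := by
    ext x
    cases x with
    | inl i => simp [psi_mem_inl]
    | inr i => simp
  have h2 : (psi n S).filter (fun e => e.isRight)
      = (Finset.univ.filter (fun e => e.isRight)) \ S := by
    ext x
    cases x with
    | inl i => simp [psi_mem_inl]
    | inr i => simp [psi_mem_inr]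
  have h3 : (Finset.univ.filter (fun e => e.isRight)) \ S
      = (Finset.univ.filter (fun e => e.isRight)) \ (S.filter (fun e => e.isRight)) := by
    ext x
    cases x <;> simp
  have hsub : S.filter (fun e => e.isRight) ⊆ Finset.univ.filter (fun e => e.isRight) :=
    fun x hx => by simp_all
  have hfr : S.filter (fun e => e.isRight) = S.filter (fun e => ¬ (e.isLeft = true)) := by
    ext x; cases x <;> simp
  have hcardsplit : (S.filter (fun e => e.isLeft)).card
      + (S.filter (fun e => e.isRight)).card = n := by
    rw [hfr, Finset.card_filter_add_card_filter_not, hS]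
  rw [h1, h2, h3, Finset.card_sdiff_of_subset hsub, card_filter_isRight_univ]
  have hle : (S.filter (fun e => e.isRight)).card ≤ n := by
    have := Finset.card_le_card hsub
    rwa [card_filter_isRight_univ] at this
  omega

lemma trail_card_lb (n : ℕ) :
    Nat.centralBinom n ≤
      {T : Finset (Fin n ⊕ Fin n) | IsTrail (Gsrc n) (Gtgt n) T}.ncard := by
  classical
  set A : Set (Finset (Fin n ⊕ Fin n)) :=
    {T | IsTrail (Gsrc n) (Gtgt n) T} with hA
  have hfin : A.Finite := Set.toFinite A
  set f : {S : Finset (Fin n ⊕ Fin n) // S.card = n} → Finset (Fin n ⊕ Fin n) :=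
    fun S => psi n S.1 with hf
  have hfinj : Function.Injective f := fun S S' h => Subtype.ext (psi_injective n h)
  have hrange : Set.range f ⊆ A := by
    rintro _ ⟨S, rfl⟩
    exact balanced_isTrail _ (psi_balanced S.1 S.2)
  have hcard : (Set.range f).ncard = Nat.centralBinom n := by
    rw [← Set.image_univ, Set.ncard_image_of_injective _ hfinj, Set.ncard_univ,
      Nat.card_eq_fintype_card, Fintype.card_finset_len]
    simp [Nat.centralBinom, Nat.two_mul]
  calc Nat.centralBinom n = (Set.range f).ncard := hcard.symm
    _ ≤ A.ncard := Set.ncard_le_ncard hrange hfin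

lemma cb_lb : ∀ n : ℕ, 1 ≤ n → (4 : ℝ) ^ n ≤ 2 * Real.sqrt n * (Nat.centralBinom n) := by
  intro n hn
  induction n, hn using Nat.le_induction with
  | base => norm_num [Nat.centralBinom, Real.sqrt_one]
  | succ n hn ih =>
      have hc : ((n + 1 : ℕ) : ℝ) = (n : ℝ) + 1 := by push_cast; ring
      rw [hc]
      set C : ℝ := (Nat.centralBinom n : ℝ) with hC
      have key : ((n : ℝ) + 1) * Nat.centralBinom (n + 1)
          = 2 * (2 * n + 1) * C := by
        rw [hC]
        exact_mod_cast Nat.succ_mul_centralBinom_succ n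
      have hs1 : Real.sqrt ((n : ℝ) + 1) ^ 2 = (n : ℝ) + 1 := Real.sq_sqrt (by positivity)
      have hsnn : (0:ℝ) ≤ Real.sqrt n := Real.sqrt_nonneg _
      have hs1nn : (0:ℝ) ≤ Real.sqrt ((n : ℝ) + 1) := Real.sqrt_nonneg _
      have hcbnn : (0:ℝ) ≤ C := Nat.cast_nonneg _
      have hmain : 2 * Real.sqrt n * Real.sqrt ((n : ℝ) + 1) ≤ 2 * n + 1 := by
        nlinarith [sq_nonneg (Real.sqrt n - Real.sqrt ((n : ℝ) + 1)),
          Real.sq_sqrt (show (0:ℝ) ≤ (n:ℝ) by positivity), hs1]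
      have hnp : (0:ℝ) < (n:ℝ) + 1 := by positivity
      have h0 : (0:ℝ) ≤ 4 * Real.sqrt ((n : ℝ) + 1) * C := by positivity
      have h1 := mul_le_mul_of_nonneg_left hmain h0
      have e2 : 4 * Real.sqrt ((n : ℝ) + 1) * C * (2 * Real.sqrt n * Real.sqrt ((n : ℝ) + 1))
          = ((n:ℝ) + 1) * (4 * (2 * Real.sqrt n * C)) := by
        linear_combination (8 * Real.sqrt n * C) * hs1
      have e3 : 4 * Real.sqrt ((n : ℝ) + 1) * C * (2 * (n:ℝ) + 1)
          = Real.sqrt ((n : ℝ) + 1) * (2 * (2 * (n:ℝ) + 1) * C) * 2 := by ring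
      have step : ((n:ℝ) + 1) * (4 * (2 * Real.sqrt n * C))
          ≤ ((n:ℝ) + 1) * (2 * Real.sqrt ((n : ℝ) + 1) * Nat.centralBinom (n + 1)) := by
        have hr : ((n:ℝ) + 1) * (2 * Real.sqrt ((n : ℝ) + 1) * Nat.centralBinom (n + 1))
            = Real.sqrt ((n : ℝ) + 1) * (2 * (2 * (n:ℝ) + 1) * C) * 2 := by
          rw [show ((n:ℝ) + 1) * (2 * Real.sqrt ((n : ℝ) + 1) * Nat.centralBinom (n + 1))
              = 2 * Real.sqrt ((n : ℝ) + 1) * (((n:ℝ) + 1) * Nat.centralBinom (n + 1)) by ring,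
            key]
          ring
        rw [hr, ← e3, ← e2]
        exact h1
      have step' : 4 * (2 * Real.sqrt n * C)
          ≤ 2 * Real.sqrt ((n : ℝ) + 1) * Nat.centralBinom (n + 1) :=
        le_of_mul_le_mul_left step hnp
      calc (4:ℝ) ^ (n + 1) = 4 * 4 ^ n := by ring
        _ ≤ 4 * (2 * Real.sqrt n * C) := by linarith
        _ ≤ 2 * Real.sqrt ((n : ℝ) + 1) * Nat.centralBinom (n + 1) := step'

/-- There is a constant `c > 0` such that for every `n ≥ 1`, the graph `G(2n)` with
`m = 2n` edges has trail-fraction `f(G(2n)) = d(G(2n))/2^m ≥ c/√m`. -/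
theorem trail_fraction_lower_bound :
    ∃ c : ℝ, 0 < c ∧
      ∀ n : ℕ, 1 ≤ n →
        c / Real.sqrt (2 * n) ≤
          ({T : Finset (Fin n ⊕ Fin n) |
              IsTrail (Gsrc n) (Gtgt n) T}.ncard : ℝ) / 2 ^ (2 * n) := by
  refine ⟨1/2, by norm_num, fun n hn => ?_⟩
  have hcb := cb_lb n hn
  have hn1 : (1:ℝ) ≤ (n:ℝ) := by exact_mod_cast hn
  have hN : (Nat.centralBinom n : ℝ) ≤
      ({T : Finset (Fin n ⊕ Fin n) | IsTrail (Gsrc n) (Gtgt n) T}.ncard : ℝ) := by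
    exact_mod_cast trail_card_lb n
  have h4 : ((2:ℝ)) ^ (2 * n) = 4 ^ n := by
    rw [pow_mul]; norm_num
  have hs2n : (0:ℝ) < Real.sqrt (2 * (n:ℝ)) := Real.sqrt_pos.mpr (by positivity)
  have hsle : Real.sqrt (n:ℝ) ≤ Real.sqrt (2 * (n:ℝ)) := by
    apply Real.sqrt_le_sqrt; linarith
  rw [h4, div_le_div_iff₀ hs2n (by positivity)]
  calc (1/2 : ℝ) * 4 ^ n
      ≤ 1/2 * (2 * Real.sqrt n * Nat.centralBinom n) := by linarith
    _ = Real.sqrt n * Nat.centralBinom n := by ring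
    _ ≤ Real.sqrt (2 * (n:ℝ)) * ({T : Finset (Fin n ⊕ Fin n) |
          IsTrail (Gsrc n) (Gtgt n) T}.ncard : ℝ) := by
        exact mul_le_mul hsle hN (Nat.cast_nonneg _) (le_of_lt hs2n)
    _ = _ := by ring
end
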